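/- arXiv:1804.05418 — 4 statements merged into one kernel-verified Lean document; each statement's English description precedes it below -/
import Mathlib

section
/- The solution of the ODE initial value problem ∂F/∂t (s,t) = F(s,t)^N − F(s,t) with F(s,0) = s, for fixed s with |s| ≤ 1 and integer N ≥ 2, is given by F(s,t) = s · (e^{−(N−1)t} / (1 − s^{N−1}(1 − e^{−(N−1)t})))^{1/(N−1)} for all t ≥ 0. -/
/-- The explicit formula
`F(s,t) = s · (e^{−(N−1)t} / (1 − s^{N−1}(1 − e^{−(N−1)t})))^{1/(N−1)}`
solves the ODE `∂F/∂t = F^N − F` with `F(s,0) = s`, for fixed `|s| ≤ 1` and `N ≥ 2`. -/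
theorem stmt0 (N : ℕ) (hN : 2 ≤ N) (s : ℝ) (hs : |s| ≤ 1)
    (F : ℝ → ℝ)
    (hF : ∀ t : ℝ, F t = s * (Real.exp (-((N : ℝ) - 1) * t) /
      (1 - s ^ (N - 1) * (1 - Real.exp (-((N : ℝ) - 1) * t)))) ^ ((1 : ℝ) / ((N : ℝ) - 1))) :
    F 0 = s ∧ ∀ t : ℝ, 0 ≤ t → HasDerivAt F (F t ^ N - F t) t := by
  have hFfun : F = fun t => s * (Real.exp (-((N : ℝ) - 1) * t) /
      (1 - s ^ (N - 1) * (1 - Real.exp (-((N : ℝ) - 1) * t)))) ^ ((1 : ℝ) / ((N : ℝ) - 1)) :=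
    funext hF
  set c : ℝ := (N : ℝ) - 1 with hcdef
  have hN2 : (2:ℝ) ≤ (N:ℝ) := by exact_mod_cast hN
  have hc : 0 < c := by rw [hcdef]; linarith
  have hcc : ((N - 1 : ℕ) : ℝ) = c := by
    have h1 : 1 ≤ N := by omega
    rw [hcdef]; push_cast [h1]; ring
  set a : ℝ := s ^ (N - 1) with hadef
  have ha : |a| ≤ 1 := by
    rw [hadef, abs_pow]
    exact pow_le_one₀ (abs_nonneg s) hs
  have ha1 := abs_le.mp ha
  constructor
  · rw [hF 0]; norm_num
  intro t ht
  set E : ℝ := Real.exp (-c * t) with hEdef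
  have hEpos : 0 < E := Real.exp_pos _
  have hE1 : E ≤ 1 := by
    rw [hEdef, Real.exp_le_one_iff]
    nlinarith
  have hDpos : 0 < 1 - a * (1 - E) := by nlinarith
  have hgpos : 0 < E / (1 - a * (1 - E)) := div_pos hEpos hDpos
  have hEd : HasDerivAt (fun t => Real.exp (-c * t)) (E * -c) t := by
    have h1 : HasDerivAt (fun t : ℝ => -c * t) (-c) t := by
      simpa using (hasDerivAt_id t).const_mul (-c)
    simpa [hEdef] using h1.exp
  have hDd : HasDerivAt (fun t => 1 - a * (1 - Real.exp (-c * t))) (a * (E * -c)) t := by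
    have h2 := ((hasDerivAt_const t (1:ℝ)).sub hEd).const_mul a
    have h3 := (hasDerivAt_const t (1:ℝ)).sub h2
    exact h3.congr_deriv (by ring)
  have hgd : HasDerivAt (fun t => Real.exp (-c*t) / (1 - a * (1 - Real.exp (-c*t))))
      (((E * -c) * (1 - a*(1-E)) - E * (a * (E * -c))) / (1 - a*(1-E))^2) t :=
    hEd.div hDd hDpos.ne'
  have hFd : HasDerivAt F
      (s * ((((E * -c) * (1 - a*(1-E)) - E * (a * (E * -c))) / (1 - a*(1-E))^2) * ((1:ℝ)/c)
        * (E / (1 - a*(1-E))) ^ ((1:ℝ)/c - 1))) t := by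
    rw [hFfun]
    exact (hgd.rpow_const (Or.inl hgpos.ne')).const_mul s
  convert hFd using 1
  -- algebra
  set g : ℝ := E / (1 - a * (1 - E)) with hgdef
  set x : ℝ := g ^ ((1:ℝ)/c) with hxdef
  have hxpos : 0 < x := Real.rpow_pos_of_pos hgpos _
  have hxN : x ^ (N - 1) = g := by
    rw [hxdef, ← Real.rpow_natCast (g ^ ((1:ℝ)/c)) (N-1), ← Real.rpow_mul hgpos.le, hcc,
      one_div, inv_mul_cancel₀ hc.ne', Real.rpow_one]
  have hrp : g ^ ((1:ℝ)/c - 1) = x / g := by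
    rw [Real.rpow_sub hgpos, Real.rpow_one, hxdef]
  have hFt : F t = s * x := by rw [hF t]
  have hN1 : N - 1 + 1 = N := by omega
  have hxNN : x ^ N = g * x := by rw [← hN1, pow_succ, hxN]
  have hsN : s ^ N = a * s := by rw [← hN1, pow_succ, hadef]
  rw [hFt, hrp, mul_pow, hxNN, hsN]
  have hD : (1 - a * (1 - E)) ≠ 0 := hDpos.ne'
  rw [hgdef]
  field_simp
  ring
end

section
/- Let (r_t)_{t≥0} be ℕ-valued random variables with r_t → ∞ in probability, and for each t let (a_{k,t})_{1≤k≤r_t} be a.s. positive random weights satisfying Σ_{k=1}^{r_t} a_{k,t} → a_∞ in probability (a_∞ > 0 a.s.) and max_{k≤r_t} a_{k,t} → 0 in probability. Let (X_k) be i.i.d. with characteristic function φ_0 satisfying log φ_0(ξ) = i m_0 ξ − π c_0^+ |ξ| + o(|ξ|) as ξ → 0, independent of the weights. Then the characteristic function of S_t = Σ_{k=1}^{r_t} a_{k,t} X_k satisfies E e^{iξ S_t} → E[exp(i m_0 ξ a_∞ − π c_0^+ |ξ| a_∞)] for every ξ ∈ ℝ. -/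
set_option maxHeartbeats 1000000
open MeasureTheory ProbabilityTheory Filter

-- helper: piecewise-in-ℕ measurability
theorem meas_nat_comp {Ω γ : Type*} [MeasurableSpace Ω] [MeasurableSpace γ]
    {n : Ω → ℕ} {H : ℕ → Ω → γ} (hn : Measurable n) (hH : ∀ m, Measurable (H m)) :
    Measurable fun ω => H (n ω) ω := by
  have : Measurable fun p : Ω × ℕ => H p.2 p.1 := measurable_from_prod_countable_left fun m => hH m
  exact this.comp (measurable_id.prodMk hn)

-- helper: fold max bounds
theorem le_fold_max {s : Finset ℕ} {f : ℕ → ℝ} {b : ℝ} {k : ℕ} (hk : k ∈ s) :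
    f k ≤ s.fold max b f := by
  classical
  induction s using Finset.induction_on with
  | empty => simp at hk
  | insert j t h ih =>
    rw [Finset.fold_insert h]
    rcases Finset.mem_insert.1 hk with rfl | hk'
    · exact le_max_left _ _
    · exact (ih hk').trans (le_max_right _ _)

theorem fold_max_nonneg {s : Finset ℕ} {f : ℕ → ℝ} : (0:ℝ) ≤ s.fold max 0 f := by
  classical
  induction s using Finset.induction_on with
  | empty => simp
  | insert j t h ih =>
    rw [Finset.fold_insert h]
    exact le_max_of_le_right ih

theorem indep_integral_mul {Ω : Type*} [MeasurableSpace Ω] (μ : Measure Ω)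
    [IsProbabilityMeasure μ] {U V : Ω → ℂ} (h : IndepFun U V μ)
    (hU : Measurable U) (hV : Measurable V) :
    ∫ ω, U ω * V ω ∂μ = (∫ ω, U ω ∂μ) * ∫ ω, V ω ∂μ := by
  rw [indepFun_iff_map_prod_eq_prod_map_map hU.aemeasurable hV.aemeasurable] at h
  haveI : IsProbabilityMeasure (μ.map U) := Measure.isProbabilityMeasure_map hU.aemeasurable
  haveI : IsProbabilityMeasure (μ.map V) := Measure.isProbabilityMeasure_map hV.aemeasurable
  have h1 : ∫ ω, U ω * V ω ∂μ = ∫ p : ℂ × ℂ, p.1 * p.2 ∂(μ.map fun ω => (U ω, V ω)) := by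
    rw [integral_map (hU.prodMk hV).aemeasurable]
    exact (measurable_fst.mul measurable_snd).aestronglyMeasurable
  rw [h1, h, integral_prod_mul (f := fun x : ℂ => x) (g := fun x : ℂ => x)]
  rw [integral_map (f := fun x => x) hU.aemeasurable measurable_id.aestronglyMeasurable,
    integral_map (f := fun x => x) hV.aemeasurable measurable_id.aestronglyMeasurable]

theorem indep_integral_prod {Ω : Type*} [MeasurableSpace Ω] (μ : Measure Ω)
    [IsProbabilityMeasure μ] {Y : ℕ → Ω → ℂ}
    (h : iIndepFun Y μ) (hm : ∀ k, Measurable (Y k)) (n : ℕ) :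
    ∫ ω, ∏ k ∈ Finset.range n, Y k ω ∂μ = ∏ k ∈ Finset.range n, ∫ ω, Y k ω ∂μ := by
  induction n with
  | zero => simp
  | succ n ih =>
    have hind : IndepFun (∏ j ∈ Finset.range n, Y j) (Y n) μ :=
      h.indepFun_prod_range_succ hm n
    have hPm : Measurable (∏ j ∈ Finset.range n, Y j) := by
      have : Measurable fun ω => ∏ j ∈ Finset.range n, Y j ω :=
        Finset.measurable_prod _ fun i _ => hm i
      simpa [Finset.prod_fn] using this
    have := indep_integral_mul μ hind hPm (hm n)
    simp only [Finset.prod_apply] at this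
    simp only [Finset.prod_range_succ]
    rw [this, ih]

theorem norm_exp_I_mul (c x : ℝ) : ‖Complex.exp (Complex.I * c * x)‖ = 1 := by
  rw [Complex.norm_exp]
  have : (Complex.I * c * x).re = 0 := by
    simp [Complex.mul_re, Complex.mul_im]
  rw [this, Real.exp_zero]

theorem phi0_cont {Ω : Type*} [MeasurableSpace Ω] (μ : Measure Ω) [IsProbabilityMeasure μ]
    {X0 : Ω → ℝ} (hX0 : Measurable X0) {φ0 : ℝ → ℂ}
    (hφ0 : ∀ c : ℝ, φ0 c = ∫ ω, Complex.exp (Complex.I * c * X0 ω) ∂μ) :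
    Continuous φ0 := by
  have h : φ0 = fun c : ℝ => ∫ ω, Complex.exp (Complex.I * c * X0 ω) ∂μ := funext hφ0
  rw [h]
  apply continuous_of_dominated (bound := fun _ => (1:ℝ))
  · intro c
    exact ((measurable_const.mul (Complex.measurable_ofReal.comp hX0)).cexp).aestronglyMeasurable
  · intro c
    exact ae_of_all _ fun ω => le_of_eq (norm_exp_I_mul c (X0 ω))
  · exact integrable_const 1
  · exact ae_of_all _ fun ω => Complex.continuous_exp.comp
      ((continuous_const.mul Complex.continuous_ofReal).mul continuous_const)

theorem phi0_norm_le {Ω : Type*} [MeasurableSpace Ω] (μ : Measure Ω) [IsProbabilityMeasure μ]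
    {X0 : Ω → ℝ} {φ0 : ℝ → ℂ}
    (hφ0 : ∀ c : ℝ, φ0 c = ∫ ω, Complex.exp (Complex.I * c * X0 ω) ∂μ) (c : ℝ) :
    ‖φ0 c‖ ≤ 1 := by
  rw [hφ0 c]
  have := norm_integral_le_of_norm_le_const (μ := μ)
    (f := fun ω => Complex.exp (Complex.I * c * X0 ω)) (C := 1)
    (ae_of_all _ fun ω => le_of_eq (norm_exp_I_mul c (X0 ω)))
  simpa using this

theorem cond_identity {Ω : Type*} [MeasurableSpace Ω] (μ : Measure Ω) [IsProbabilityMeasure μ]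
    (R : Ω → ℕ) (b : ℕ → Ω → ℝ) (X : ℕ → Ω → ℝ) (ξ : ℝ)
    (hR : Measurable R) (hb : ∀ k, Measurable (b k)) (hX : ∀ k, Measurable (X k))
    (hiid : iIndepFun X μ)
    (hident : ∀ k, Measure.map (X k) μ = Measure.map (X 0) μ)
    (hindep : IndepFun (fun ω => (R ω, fun k => b k ω)) (fun ω k => X k ω) μ)
    (φ0 : ℝ → ℂ) (hφ0 : ∀ c : ℝ, φ0 c = ∫ ω, Complex.exp (Complex.I * c * X 0 ω) ∂μ)
    (hφ0m : Measurable φ0) :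
    ∫ ω, Complex.exp (Complex.I * ξ * (∑ k ∈ Finset.range (R ω), b k ω * X k ω)) ∂μ
      = ∫ ω, ∏ k ∈ Finset.range (R ω), φ0 (ξ * b k ω) ∂μ := by
  classical
  obtain ⟨W, hW⟩ : ∃ W : Ω → ℕ × (ℕ → ℝ), W = fun ω => (R ω, fun k => b k ω) := ⟨_, rfl⟩
  obtain ⟨V, hV⟩ : ∃ V : Ω → (ℕ → ℝ), V = fun ω k => X k ω := ⟨_, rfl⟩
  obtain ⟨F, hF⟩ : ∃ F : (ℕ × (ℕ → ℝ)) × (ℕ → ℝ) → ℂ,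
      F = fun p : (ℕ × (ℕ → ℝ)) × (ℕ → ℝ) => Complex.exp (Complex.I * ξ * ((∑ k ∈ Finset.range p.1.1, p.1.2 k * p.2 k : ℝ) : ℂ)) :=
    ⟨_, rfl⟩
  have hWm : Measurable W := by simp only [hW]; exact hR.prodMk (measurable_pi_lambda _ hb)
  have hVm : Measurable V := by simp only [hV]; exact measurable_pi_lambda _ hX
  have hFm : Measurable F := by
    simp only [hF]
    apply meas_nat_comp (n := fun p : (ℕ × (ℕ → ℝ)) × (ℕ → ℝ) => p.1.1)
      (H := fun (m : ℕ) (p : (ℕ × (ℕ → ℝ)) × (ℕ → ℝ)) => Complex.exp (Complex.I * ξ * ((∑ k ∈ Finset.range m, p.1.2 k * p.2 k : ℝ) : ℂ)))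
      (measurable_fst.comp measurable_fst)
    intro m
    apply Measurable.cexp
    apply measurable_const.mul
    apply Complex.measurable_ofReal.comp
    apply Finset.measurable_sum
    intro k _
    exact ((measurable_pi_apply k).comp (measurable_snd.comp measurable_fst)).mul
      ((measurable_pi_apply k).comp measurable_snd)
  obtain ⟨G, hG⟩ : ∃ G : ℕ × (ℕ → ℝ) → ℂ,
      G = fun w : ℕ × (ℕ → ℝ) => ∏ k ∈ Finset.range w.1, φ0 (ξ * w.2 k) := ⟨_, rfl⟩
  have hGm : Measurable G := by
    simp only [hG]
    apply meas_nat_comp (n := fun w : ℕ × (ℕ → ℝ) => w.1)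
      (H := fun (m : ℕ) (w : ℕ × (ℕ → ℝ)) => ∏ k ∈ Finset.range m, φ0 (ξ * w.2 k)) measurable_fst
    intro m
    apply Finset.measurable_prod
    intro k _
    exact hφ0m.comp (measurable_const.mul ((measurable_pi_apply k).comp measurable_snd))
  haveI : IsProbabilityMeasure (μ.map W) := Measure.isProbabilityMeasure_map hWm.aemeasurable
  haveI : IsProbabilityMeasure (μ.map V) := Measure.isProbabilityMeasure_map hVm.aemeasurable
  have hmap : μ.map (fun ω => (W ω, V ω)) = (μ.map W).prod (μ.map V) := by
    rw [← indepFun_iff_map_prod_eq_prod_map_map hWm.aemeasurable hVm.aemeasurable, hW, hV]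
    exact hindep
  have hFint : Integrable F ((μ.map W).prod (μ.map V)) := by
    apply Integrable.mono' (integrable_const (1:ℝ)) hFm.aestronglyMeasurable
    exact ae_of_all _ fun p => by simp only [hF]; exact le_of_eq (norm_exp_I_mul ξ _)
  have inner : ∀ w : ℕ × (ℕ → ℝ),
      ∫ x, F (w, x) ∂(μ.map V) = G w := by
    intro w
    have h1 : ∫ x, F (w, x) ∂(μ.map V) = ∫ ω, F (w, V ω) ∂μ :=
      integral_map hVm.aemeasurable (hFm.comp measurable_prodMk_left).aestronglyMeasurable
    have h2 : ∀ ω, F (w, V ω) =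
        ∏ k ∈ Finset.range w.1, Complex.exp (Complex.I * ((ξ * w.2 k : ℝ) : ℂ) * X k ω) := by
      intro ω
      simp only [hF, hV]
      rw [← Complex.exp_sum]
      congr 1
      push_cast
      rw [Finset.mul_sum]
      exact Finset.sum_congr rfl fun k _ => by ring
    have hmexp : ∀ (k : ℕ) (c : ℝ), Measurable fun x : ℝ => Complex.exp (Complex.I * c * x) :=
      fun k c => (measurable_const.mul Complex.measurable_ofReal).cexp
    have h3 : ∫ ω, ∏ k ∈ Finset.range w.1,
        Complex.exp (Complex.I * ((ξ * w.2 k : ℝ) : ℂ) * X k ω) ∂μ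
        = ∏ k ∈ Finset.range w.1, ∫ ω, Complex.exp (Complex.I * ((ξ * w.2 k : ℝ) : ℂ) * X k ω) ∂μ := by
      apply indep_integral_prod μ
        (Y := fun k ω => Complex.exp (Complex.I * ((ξ * w.2 k : ℝ) : ℂ) * X k ω))
      · exact hiid.comp (fun k x => Complex.exp (Complex.I * ((ξ * w.2 k : ℝ) : ℂ) * x))
          (fun k => hmexp k (ξ * w.2 k))
      · exact fun k => (hmexp k (ξ * w.2 k)).comp (hX k)
    have h4 : ∀ (k : ℕ) (c : ℝ),
        ∫ ω, Complex.exp (Complex.I * c * X k ω) ∂μ = φ0 c := by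
      intro k c
      rw [hφ0 c]
      calc ∫ ω, Complex.exp (Complex.I * c * X k ω) ∂μ
          = ∫ x, Complex.exp (Complex.I * c * x) ∂(μ.map (X k)) :=
            (integral_map (hX k).aemeasurable (hmexp k c).aestronglyMeasurable).symm
        _ = ∫ x, Complex.exp (Complex.I * c * x) ∂(μ.map (X 0)) := by rw [hident k]
        _ = ∫ ω, Complex.exp (Complex.I * c * X 0 ω) ∂μ :=
            integral_map (hX 0).aemeasurable (hmexp 0 c).aestronglyMeasurable
    rw [h1]
    simp_rw [h2]
    rw [h3]
    simp only [hG]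
    exact Finset.prod_congr rfl fun k _ => h4 k _
  calc ∫ ω, Complex.exp (Complex.I * ξ * (∑ k ∈ Finset.range (R ω), b k ω * X k ω)) ∂μ
      = ∫ ω, F (W ω, V ω) ∂μ := by simp only [hF, hW, hV]
    _ = ∫ p, F p ∂(μ.map fun ω => (W ω, V ω)) :=
        (integral_map (hWm.prodMk hVm).aemeasurable hFm.aestronglyMeasurable).symm
    _ = ∫ p, F p ∂((μ.map W).prod (μ.map V)) := by rw [hmap]
    _ = ∫ w, ∫ x, F (w, x) ∂(μ.map V) ∂(μ.map W) := integral_prod F hFint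
    _ = ∫ w, G w ∂(μ.map W) := by simp_rw [inner]
    _ = ∫ ω, G (W ω) ∂μ := integral_map hWm.aemeasurable hGm.aestronglyMeasurable
    _ = ∫ ω, ∏ k ∈ Finset.range (R ω), φ0 (ξ * b k ω) ∂μ := by simp only [hG, hW]

theorem pointwise_prod_tendsto
    (φ0 : ℝ → ℂ) (m0 c0 ξ : ℝ) (hc0 : 0 < c0) (hφ00 : φ0 0 = 1)
    (hexp : (fun ξ : ℝ => Complex.log (φ0 ξ) -
        (Complex.I * m0 * ξ - Real.pi * c0 * |ξ|)) =o[nhds 0] fun ξ => ξ)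
    (R : ℕ → ℕ) (b : ℕ → ℕ → ℝ) (s : ℝ)
    (hb : ∀ j k, 0 < b j k)
    (hsum : Tendsto (fun j => ∑ k ∈ Finset.range (R j), b j k) atTop (nhds s))
    (hmax : Tendsto (fun j => (Finset.range (R j)).fold max 0 (b j)) atTop (nhds 0)) :
    Tendsto (fun j => ∏ k ∈ Finset.range (R j), φ0 (ξ * b j k)) atTop
      (nhds (Complex.exp (Complex.I * m0 * ξ * s - Real.pi * c0 * |ξ| * s))) := by
  classical
  -- quantitative little-o
  have hoB : ∀ ε : ℝ, 0 < ε → ∃ δ : ℝ, 0 < δ ∧ ∀ u : ℝ, |u| < δ →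
      ‖Complex.log (φ0 u) - (Complex.I * m0 * u - Real.pi * c0 * |u|)‖ ≤ ε * |u| := by
    intro ε hε
    have h := hexp.def hε
    rw [Metric.eventually_nhds_iff] at h
    obtain ⟨δ, hδ, h⟩ := h
    refine ⟨δ, hδ, fun u hu => ?_⟩
    have := h (y := u) (by simpa [Real.dist_eq] using hu)
    simpa [Real.norm_eq_abs] using this
  obtain ⟨δ0, hδ0, h0⟩ := hoB (Real.pi * c0 / 2) (by positivity)
  -- nonvanishing near 0
  have hne : ∀ u : ℝ, |u| < δ0 → φ0 u ≠ 0 := by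
    intro u hu hzero
    rcases eq_or_ne u 0 with rfl | hu0
    · rw [hφ00] at hzero; exact one_ne_zero hzero
    · have h1 := h0 u hu
      rw [hzero, Complex.log_zero, zero_sub, norm_neg] at h1
      have hre : (Complex.I * m0 * u - (Real.pi : ℂ) * c0 * |u|).re
          = -(Real.pi * c0 * |u|) := by
        simp [Complex.mul_re, Complex.mul_im]
      have h2 : Real.pi * c0 * |u| ≤ ‖Complex.I * (m0:ℂ) * u - (Real.pi : ℂ) * c0 * |u|‖ := by
        have h3 := Complex.abs_re_le_norm (Complex.I * m0 * u - (Real.pi : ℂ) * c0 * |u|)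
        rw [hre, abs_neg, abs_of_nonneg (by positivity : (0:ℝ) ≤ Real.pi * c0 * |u|)] at h3
        exact h3
      have hupos : 0 < |u| := abs_pos.2 hu0
      nlinarith [Real.pi_pos, mul_pos (mul_pos Real.pi_pos hc0) hupos]
  set c : ℂ := Complex.I * m0 * ξ - (Real.pi : ℂ) * c0 * |ξ| with hc
  set A : ℕ → ℝ := fun j => ∑ k ∈ Finset.range (R j), b j k with hA
  have hAnn : ∀ j, 0 ≤ A j := fun j => Finset.sum_nonneg fun k _ => (hb j k).le
  have habs : ∀ j k, |ξ * b j k| = |ξ| * b j k := fun j k => by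
    rw [abs_mul, abs_of_pos (hb j k)]
  have hca : ∀ j, c * (A j : ℂ) = ∑ k ∈ Finset.range (R j),
      (Complex.I * m0 * (ξ * b j k : ℝ) - (Real.pi : ℂ) * c0 * (|ξ * b j k| : ℝ)) := by
    intro j
    have : ((A j : ℝ) : ℂ) = ∑ k ∈ Finset.range (R j), ((b j k : ℝ) : ℂ) := by
      rw [hA]; push_cast; rfl
    rw [this, Finset.mul_sum]
    refine Finset.sum_congr rfl fun k _ => ?_
    rw [habs j k, hc]
    push_cast
    ring
  -- the key convergence of log sums
  have hkey : Tendsto (fun j => ∑ k ∈ Finset.range (R j), Complex.log (φ0 (ξ * b j k)))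
      atTop (nhds (c * s)) := by
    have hca' : Tendsto (fun j => c * (A j : ℂ)) atTop (nhds (c * s)) :=
      (Complex.continuous_ofReal.tendsto s |>.comp hsum).const_mul c
    have hdiff : Tendsto (fun j => (∑ k ∈ Finset.range (R j), Complex.log (φ0 (ξ * b j k)))
        - c * (A j : ℂ)) atTop (nhds 0) := by
      rw [NormedAddCommGroup.tendsto_nhds_zero]
      intro ε hε
      set D : ℝ := |ξ| * (|s| + 1) with hD
      have hDnn : 0 ≤ D := by positivity
      set ε' : ℝ := min (Real.pi * c0 / 2) (ε / (D + 1)) with hε'def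
      have hε' : 0 < ε' := lt_min (by positivity) (by positivity)
      obtain ⟨δ, hδpos, hδ⟩ := hoB ε' hε'
      have h1 : ∀ᶠ j in atTop, (Finset.range (R j)).fold max 0 (b j)
          < min δ δ0 / (|ξ| + 1) := hmax.eventually_lt_const (by positivity)
      have h2 : ∀ᶠ j in atTop, A j < |s| + 1 :=
        hsum.eventually_lt_const (by linarith [le_abs_self s])
      filter_upwards [h1, h2] with j hj1 hj2
      have hsmall : ∀ k ∈ Finset.range (R j), |ξ * b j k| < min δ δ0 := by
        intro k hk
        rw [habs j k]
        have hbk : b j k ≤ (Finset.range (R j)).fold max 0 (b j) := le_fold_max hk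
        have hMnn : 0 ≤ (Finset.range (R j)).fold max 0 (b j) := fold_max_nonneg
        calc |ξ| * b j k ≤ (|ξ| + 1) * ((Finset.range (R j)).fold max 0 (b j)) := by
              nlinarith [abs_nonneg ξ, (hb j k).le]
          _ < (|ξ| + 1) * (min δ δ0 / (|ξ| + 1)) := by
              apply mul_lt_mul_of_pos_left hj1 (by positivity)
          _ = min δ δ0 := by field_simp
      have hterm : ∀ k ∈ Finset.range (R j),
          ‖Complex.log (φ0 (ξ * b j k)) - (Complex.I * m0 * (ξ * b j k : ℝ)
            - (Real.pi : ℂ) * c0 * (|ξ * b j k| : ℝ))‖ ≤ ε' * (|ξ| * b j k) := by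
        intro k hk
        calc ‖Complex.log (φ0 (ξ * b j k)) - (Complex.I * m0 * (ξ * b j k : ℝ)
            - (Real.pi : ℂ) * c0 * (|ξ * b j k| : ℝ))‖
            ≤ ε' * |ξ * b j k| := hδ (ξ * b j k) (lt_of_lt_of_le (hsmall k hk) (min_le_left _ _))
          _ = ε' * (|ξ| * b j k) := by rw [habs j k]
      calc ‖(∑ k ∈ Finset.range (R j), Complex.log (φ0 (ξ * b j k))) - c * (A j : ℂ)‖
          = ‖∑ k ∈ Finset.range (R j), (Complex.log (φ0 (ξ * b j k))
            - (Complex.I * m0 * (ξ * b j k : ℝ)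
              - (Real.pi : ℂ) * c0 * (|ξ * b j k| : ℝ)))‖ := by
            rw [hca j, ← Finset.sum_sub_distrib]
        _ ≤ ∑ k ∈ Finset.range (R j), ε' * (|ξ| * b j k) :=
            (norm_sum_le _ _).trans (Finset.sum_le_sum hterm)
        _ = ε' * (|ξ| * A j) := by
            simp only [hA, Finset.mul_sum]
        _ ≤ ε' * D := by
            apply mul_le_mul_of_nonneg_left _ hε'.le
            rw [hD]
            exact mul_le_mul_of_nonneg_left hj2.le (abs_nonneg ξ)
        _ ≤ (ε / (D + 1)) * D := mul_le_mul_of_nonneg_right (min_le_right _ _) hDnn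
        _ < ε := by
            rw [div_mul_eq_mul_div, div_lt_iff₀ (by positivity)]
            nlinarith
    have := hdiff.add hca'
    simpa using this
  -- eventually the product equals exp of the log sum
  have hprodeq : ∀ᶠ j in atTop, ∏ k ∈ Finset.range (R j), φ0 (ξ * b j k)
      = Complex.exp (∑ k ∈ Finset.range (R j), Complex.log (φ0 (ξ * b j k))) := by
    have h1 : ∀ᶠ j in atTop, (Finset.range (R j)).fold max 0 (b j)
        < δ0 / (|ξ| + 1) := hmax.eventually_lt_const (by positivity)
    filter_upwards [h1] with j hj1
    rw [Complex.exp_sum]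
    refine Finset.prod_congr rfl fun k hk => ?_
    have hsm : |ξ * b j k| < δ0 := by
      rw [habs j k]
      have hbk : b j k ≤ (Finset.range (R j)).fold max 0 (b j) := le_fold_max hk
      have hMnn : 0 ≤ (Finset.range (R j)).fold max 0 (b j) := fold_max_nonneg
      calc |ξ| * b j k ≤ (|ξ| + 1) * ((Finset.range (R j)).fold max 0 (b j)) := by
            nlinarith [abs_nonneg ξ, (hb j k).le]
        _ < (|ξ| + 1) * (δ0 / (|ξ| + 1)) := by
            apply mul_lt_mul_of_pos_left hj1 (by positivity)
        _ = δ0 := by field_simp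
    exact (Complex.exp_log (hne _ hsm)).symm
  have hfin : Tendsto (fun j => Complex.exp (∑ k ∈ Finset.range (R j),
      Complex.log (φ0 (ξ * b j k)))) atTop (nhds (Complex.exp (c * s))) :=
    (Complex.continuous_exp.tendsto _).comp hkey
  have hval : Complex.exp (c * s)
      = Complex.exp (Complex.I * m0 * ξ * s - Real.pi * c0 * |ξ| * s) := by
    rw [hc]; push_cast; ring_nf
  rw [← hval]
  exact Tendsto.congr' (hprodeq.mono fun j hj => hj.symm) hfin


set_option maxHeartbeats 1000000 in
/-- Lemma 4.1 of the paper, case `γ = 1`, hypothesis `(H_1)(b)`. Let `r_t → ∞` in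
probability, let `(a_{k,t})_{k ≤ r_t}` be a.s. positive weights with
`Σ_{k≤r_t} a_{k,t} → a_∞` in probability (`a_∞ > 0` a.s.) and `max_{k≤r_t} a_{k,t} → 0` in
probability, and let `(X_k)` be i.i.d., independent of the weights, with characteristic
function `φ_0` satisfying `log φ_0(ξ) = i m_0 ξ − π c_0⁺|ξ| + o(|ξ|)` as `ξ → 0`. Then the
characteristic function of `S_t = Σ_{k≤r_t} a_{k,t} X_k` satisfies
`E e^{iξ S_t} → E[exp(i m_0 ξ a_∞ − π c_0⁺ |ξ| a_∞)]` for every `ξ`. -/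
theorem stmt12 {Ω : Type*} [MeasurableSpace Ω] (μ : Measure Ω) [IsProbabilityMeasure μ]
    (r : ℝ → Ω → ℕ) (a : ℝ → ℕ → Ω → ℝ) (X : ℕ → Ω → ℝ) (aInf : Ω → ℝ)
    (m0 c0 : ℝ) (hc0 : 0 < c0)
    (hmeas_r : ∀ t, Measurable (r t)) (hmeas_a : ∀ t k, Measurable (a t k))
    (hmeas_X : ∀ k, Measurable (X k)) (hmeas_aInf : Measurable aInf)
    (hapos : ∀ t k, ∀ᵐ ω ∂μ, 0 < a t k ω)
    (haInfpos : ∀ᵐ ω ∂μ, 0 < aInf ω)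
    (hrinf : ∀ M : ℕ, Tendsto (fun t : ℝ => μ {ω | r t ω < M}) atTop (nhds 0))
    (hsum : TendstoInMeasure μ
      (fun (t : ℝ) (ω : Ω) => ∑ k ∈ Finset.range (r t ω), a t k ω) atTop aInf)
    (hmax : TendstoInMeasure μ
      (fun (t : ℝ) (ω : Ω) => (Finset.range (r t ω)).fold max 0 fun k => a t k ω) atTop
      (fun _ => 0))
    (hiid : iIndepFun X μ)
    (hident : ∀ k, Measure.map (X k) μ = Measure.map (X 0) μ)
    (hindepW : ∀ t : ℝ,
      IndepFun (fun ω => (r t ω, fun k => a t k ω)) (fun ω k => X k ω) μ)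
    (φ0 : ℝ → ℂ) (hφ0 : ∀ ξ : ℝ, φ0 ξ = ∫ ω, Complex.exp (Complex.I * ξ * X 0 ω) ∂μ)
    (hexp : (fun ξ : ℝ => Complex.log (φ0 ξ) -
        (Complex.I * m0 * ξ - Real.pi * c0 * |ξ|)) =o[nhds 0] fun ξ => ξ) :
    ∀ ξ : ℝ, Tendsto
      (fun t : ℝ => ∫ ω, Complex.exp
        (Complex.I * ξ * (∑ k ∈ Finset.range (r t ω), a t k ω * X k ω)) ∂μ)
      atTop
      (nhds (∫ ω, Complex.exp
        (Complex.I * m0 * ξ * aInf ω - Real.pi * c0 * |ξ| * aInf ω) ∂μ)) := by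
  intro ξ
  have hφ0cont : Continuous φ0 := phi0_cont μ (hmeas_X 0) hφ0
  have hφ0m : Measurable φ0 := hφ0cont.measurable
  have hφ00 : φ0 0 = 1 := by rw [hφ0 0]; simp
  have hφ0le : ∀ u : ℝ, ‖φ0 u‖ ≤ 1 := phi0_norm_le μ hφ0
  have hid : ∀ t : ℝ,
      (∫ ω, Complex.exp
        (Complex.I * ξ * (∑ k ∈ Finset.range (r t ω), a t k ω * X k ω)) ∂μ)
      = ∫ ω, ∏ k ∈ Finset.range (r t ω), φ0 (ξ * a t k ω) ∂μ := fun t =>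
    cond_identity μ (r t) (fun k => a t k) X ξ (hmeas_r t) (fun k => hmeas_a t k) hmeas_X
      hiid hident (hindepW t) φ0 hφ0 hφ0m
  simp only [hid]
  have hFmeas : ∀ t : ℝ,
      Measurable fun ω => ∏ k ∈ Finset.range (r t ω), φ0 (ξ * a t k ω) := by
    intro t
    exact meas_nat_comp (n := r t)
      (H := fun m ω => ∏ k ∈ Finset.range m, φ0 (ξ * a t k ω)) (hmeas_r t)
      (fun m => Finset.measurable_prod _ fun k _ =>
        hφ0m.comp (measurable_const.mul (hmeas_a t k)))
  have hbnd : ∀ (t : ℝ) (ω : Ω), ‖∏ k ∈ Finset.range (r t ω), φ0 (ξ * a t k ω)‖ ≤ 1 := by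
    intro t ω
    rw [norm_prod]
    exact Finset.prod_le_one (fun k _ => norm_nonneg _) (fun k _ => hφ0le _)
  apply tendsto_of_subseq_tendsto
  intro ns hns
  have hsum1 : TendstoInMeasure μ
      (fun (n : ℕ) (ω : Ω) => ∑ k ∈ Finset.range (r (ns n) ω), a (ns n) k ω) atTop aInf :=
    fun ε hε => (hsum ε hε).comp hns
  obtain ⟨m1, hm1, hae1⟩ := hsum1.exists_seq_tendsto_ae
  have hmax1 : TendstoInMeasure μ
      (fun (n : ℕ) (ω : Ω) =>
        (Finset.range (r (ns (m1 n)) ω)).fold max 0 fun k => a (ns (m1 n)) k ω) atTop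
      (fun _ => 0) :=
    fun ε hε => ((hmax ε hε).comp hns).comp hm1.tendsto_atTop
  obtain ⟨m2, hm2, hae2⟩ := hmax1.exists_seq_tendsto_ae
  refine ⟨m1 ∘ m2, ?_⟩
  have hae1' : ∀ᵐ ω ∂μ, Tendsto
      (fun n => ∑ k ∈ Finset.range (r (ns (m1 (m2 n))) ω), a (ns (m1 (m2 n))) k ω)
      atTop (nhds (aInf ω)) :=
    hae1.mono fun ω h => h.comp hm2.tendsto_atTop
  have hpos : ∀ᵐ ω ∂μ, ∀ n k, 0 < a (ns (m1 (m2 n))) k ω := by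
    rw [ae_all_iff]
    intro n
    rw [ae_all_iff]
    intro k
    exact hapos _ k
  have hlim : ∀ᵐ ω ∂μ, Tendsto
      (fun n => ∏ k ∈ Finset.range (r (ns (m1 (m2 n))) ω), φ0 (ξ * a (ns (m1 (m2 n))) k ω))
      atTop (nhds (Complex.exp
        (Complex.I * m0 * ξ * aInf ω - Real.pi * c0 * |ξ| * aInf ω))) := by
    filter_upwards [hae1', hae2, hpos] with ω h1 h2 h3
    exact pointwise_prod_tendsto φ0 m0 c0 ξ hc0 hφ00 hexp
      (fun n => r (ns (m1 (m2 n))) ω) (fun n k => a (ns (m1 (m2 n))) k ω) (aInf ω) h3 h1 h2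
  exact tendsto_integral_of_dominated_convergence (fun _ => (1:ℝ))
    (fun n => (hFmeas (ns (m1 (m2 n)))).aestronglyMeasurable)
    (integrable_const 1)
    (fun n => ae_of_all _ fun ω => hbnd (ns (m1 (m2 n))) ω)
    hlim
end

section
/- Let (M_t)_{t≥0} be a nonnegative martingale adapted to a filtration (F_t) such that √n · M_n → D in probability as n → ∞ through integers, where D is an a.s. finite random variable. If additionally for every x > 0, (√([t]+1) M_{[t]+1} − √([t]) M_{[t]}) 1{√([t]) M_{[t]} ≤ x} → 0 in probability as t → ∞ through integers, and the conditional Jensen argument gives E exp(−u(√([t]+1) M_t − √([t]) M_{[t]}) 1{√([t]) M_{[t]} ≤ x}) ≥ E exp(−u(√([t]+1) M_{[t]+1} − √([t]) M_{[t]}) 1{√([t]) M_{[t]} ≤ x}) for all u ≥ 0, then √t · M_t → D in probability as t → ∞ through the reals. -/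
open MeasureTheory Filter


open MeasureTheory Filter Set Topology ENNReal

noncomputable def Zf {Ω : Type*} (M : ℝ → Ω → ℝ) (x : ℝ) (n : ℕ) (t : ℝ) (ω : Ω) : ℝ :=
  (Real.sqrt ((n : ℝ) + 1) * M t ω - Real.sqrt (n : ℝ) * M (n : ℝ) ω) *
    (if Real.sqrt (n : ℝ) * M (n : ℝ) ω ≤ x then 1 else 0)

section aux

variable {Ω : Type*} {m0 : MeasurableSpace Ω} {μ : Measure Ω}
  {ℱ : Filtration ℝ m0} {M : ℝ → Ω → ℝ} {x : ℝ} {n : ℕ} {t : ℝ}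

lemma zf_eq_indicator (M : ℝ → Ω → ℝ) (x : ℝ) (n : ℕ) (t : ℝ) :
    Zf M x n t = Set.indicator {ω | Real.sqrt (n : ℝ) * M (n : ℝ) ω ≤ x}
      (fun ω => Real.sqrt ((n : ℝ) + 1) * M t ω - Real.sqrt (n : ℝ) * M (n : ℝ) ω) := by
  funext ω
  by_cases h : Real.sqrt (n : ℝ) * M (n : ℝ) ω ≤ x <;>
    simp [Zf, Set.indicator_apply, h]

lemma aset_measurable (hadp : Adapted ℱ M) (x : ℝ) (n : ℕ) :
    MeasurableSet[ℱ (n : ℝ)] {ω | Real.sqrt (n : ℝ) * M (n : ℝ) ω ≤ x} :=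
  measurableSet_le ((hadp (n : ℝ)).const_mul _) measurable_const

lemma zf_measurable (hadp : Adapted ℱ M) (x : ℝ) (n : ℕ) (hnt : (n : ℝ) ≤ t) :
    Measurable[ℱ t] (Zf M x n t) := by
  have hMt : Measurable[ℱ t] (M t) := (hadp t)
  have hMn : Measurable[ℱ t] (M (n : ℝ)) :=
    ((hadp (n : ℝ)).mono (ℱ.mono hnt) le_rfl)
  have hA : MeasurableSet[ℱ t] {ω | Real.sqrt (n : ℝ) * M (n : ℝ) ω ≤ x} :=
    ℱ.mono hnt _ (aset_measurable hadp x n)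
  exact ((hMt.const_mul _).sub (hMn.const_mul _)).mul
    (Measurable.ite hA measurable_const measurable_const)

lemma zf_integrable (hM : Martingale M ℱ μ) (x : ℝ) (n : ℕ) (t : ℝ) :
    Integrable (Zf M x n t) μ := by
  rw [zf_eq_indicator]
  refine Integrable.indicator ?_ ?_
  · exact ((hM.integrable t).const_mul _).sub ((hM.integrable (n : ℝ)).const_mul _)
  · exact ℱ.le _ _ (aset_measurable hM.stronglyAdapted.adapted x n)

/-- A.e. lower bound `Zf ≥ -x`. -/
lemma zf_ae_lower (hM : Martingale M ℱ μ) (hpos : ∀ s, 0 ≤ᵐ[μ] M s)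
    (hx : 0 < x) (n : ℕ) (t : ℝ) :
    ∀ᵐ ω ∂μ, -x ≤ Zf M x n t ω := by
  filter_upwards [hpos t] with ω hω
  by_cases h : Real.sqrt (n : ℝ) * M (n : ℝ) ω ≤ x
  · have h1 : 0 ≤ Real.sqrt ((n : ℝ) + 1) * M t ω :=
      mul_nonneg (Real.sqrt_nonneg _) hω
    simp only [Zf, if_pos h, mul_one]
    linarith
  · simp only [Zf, if_neg h, mul_zero]
    linarith

/-- Transfer of set integrals from time `n+1` to time `t` within `[n, n+1]`. -/
lemma zf_setIntegral_eq [IsProbabilityMeasure μ] (hM : Martingale M ℱ μ)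
    (hnt : (n : ℝ) ≤ t) (htn : t ≤ (n : ℝ) + 1)
    {S : Set Ω} (hS : MeasurableSet[ℱ t] S)
    (hSA : S ⊆ {ω | Real.sqrt (n : ℝ) * M (n : ℝ) ω ≤ x}) :
    ∫ ω in S, Zf M x n ((n : ℝ) + 1) ω ∂μ = ∫ ω in S, Zf M x n t ω ∂μ := by
  have hS0 : MeasurableSet S := ℱ.le t _ hS
  have h1 : ∀ s : ℝ, ∫ ω in S, Zf M x n s ω ∂μ =
      Real.sqrt ((n : ℝ) + 1) * ∫ ω in S, M s ω ∂μ -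
        Real.sqrt (n : ℝ) * ∫ ω in S, M (n : ℝ) ω ∂μ := by
    intro s
    have : ∫ ω in S, Zf M x n s ω ∂μ =
        ∫ ω in S, (Real.sqrt ((n : ℝ) + 1) * M s ω - Real.sqrt (n : ℝ) * M (n : ℝ) ω) ∂μ := by
      refine setIntegral_congr_fun hS0 fun ω hω => ?_
      have hx' : Real.sqrt (n : ℝ) * M (n : ℝ) ω ≤ x := hSA hω
      simp only [Zf, if_pos hx', mul_one]
    rw [this, integral_sub (((hM.integrable s).const_mul _).integrableOn)
      (((hM.integrable (n : ℝ)).const_mul _).integrableOn),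
      integral_const_mul, integral_const_mul]
  rw [h1, h1, hM.setIntegral_eq htn hS]

lemma setIntegral_lin (hM : Martingale M ℱ μ) (s : ℝ) {S : Set Ω} (hS : MeasurableSet S) :
    ∫ ω in S, (Real.sqrt ((n : ℝ) + 1) * M s ω - Real.sqrt (n : ℝ) * M (n : ℝ) ω) ∂μ =
      Real.sqrt ((n : ℝ) + 1) * ∫ ω in S, M s ω ∂μ -
        Real.sqrt (n : ℝ) * ∫ ω in S, M (n : ℝ) ω ∂μ := by
  rw [integral_sub (((hM.integrable s).const_mul _).integrableOn)
    (((hM.integrable (n : ℝ)).const_mul _).integrableOn),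
    integral_const_mul, integral_const_mul]

lemma zf_lower_tail [IsProbabilityMeasure μ] (hM : Martingale M ℱ μ)
    (hpos : ∀ s, 0 ≤ᵐ[μ] M s) (hx : 0 < x) {ε : ℝ} (hε : 0 < ε)
    (hnt : (n : ℝ) ≤ t) (htn : t ≤ (n : ℝ) + 1) :
    (μ {ω | Zf M x n t ω ≤ -ε}).toReal ≤
      (1 + 2 * x / ε) * (μ {ω | Zf M x n ((n : ℝ) + 1) ω ≤ -(ε / 2)}).toReal := by
  set Y : Ω → ℝ := Zf M x n ((n : ℝ) + 1) with hY
  set Z : Ω → ℝ := Zf M x n t with hZ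
  set B : Set Ω := {ω | Z ω ≤ -ε} with hB
  set B1 : Set Ω := B ∩ {ω | -(ε / 2) ≤ Y ω} with hB1
  set B2 : Set Ω := B ∩ {ω | Y ω < -(ε / 2)} with hB2
  have hBA : B ⊆ {ω | Real.sqrt (n : ℝ) * M (n : ℝ) ω ≤ x} := by
    intro ω hω
    by_contra h
    have : Z ω = 0 := by
      have h' : ¬ (Real.sqrt (n : ℝ) * M (n : ℝ) ω ≤ x) := h
      simp only [hZ, Zf]
      rw [if_neg h', mul_zero]
    have hω' : Z ω ≤ -ε := hω
    rw [this] at hω'; linarith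
  have hBmF : MeasurableSet[ℱ t] B :=
    measurableSet_le (zf_measurable hM.stronglyAdapted.adapted x n hnt) measurable_const
  have hBm : MeasurableSet B := ℱ.le t _ hBmF
  have hYm : Measurable Y :=
    (zf_measurable hM.stronglyAdapted.adapted x n (le_of_lt (by linarith [le_refl (n:ℝ)] : (n:ℝ) < (n:ℝ)+1))).mono
      (ℱ.le _) le_rfl
  have hB1m : MeasurableSet B1 := hBm.inter (measurableSet_le measurable_const hYm)
  have hB2m : MeasurableSet B2 := hBm.inter (measurableSet_lt hYm measurable_const)
  have hYint : Integrable Y μ := zf_integrable hM x n _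
  have hZint : Integrable Z μ := zf_integrable hM x n t
  have hsplit : B1 ∪ B2 = B := by
    ext ω
    simp only [Set.mem_union, Set.mem_inter_iff, Set.mem_setOf_eq]
    constructor
    · rintro (⟨h, _⟩ | ⟨h, _⟩) <;> exact h
    · intro h
      rcases le_or_gt (-(ε / 2)) (Y ω) with h' | h'
      exacts [Or.inl ⟨h, h'⟩, Or.inr ⟨h, h'⟩]
  have hdisj : Disjoint B1 B2 := by
    rw [Set.disjoint_left]
    rintro ω ⟨_, h1⟩ ⟨_, h2⟩
    simp only [Set.mem_setOf_eq] at h1 h2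
    linarith
  -- upper bound on ∫_B (Y + ε)
  have key : ∫ ω in B, (Y ω + ε) ∂μ ≤ 0 := by
    have e1 : ∫ ω in B, (Y ω + ε) ∂μ = (∫ ω in B, Y ω ∂μ) + (μ B).toReal * ε := by
      rw [integral_add hYint.integrableOn (integrable_const ε).integrableOn,
        setIntegral_const, smul_eq_mul, measureReal_def]
    have e2 : ∫ ω in B, Y ω ∂μ = ∫ ω in B, Z ω ∂μ :=
      zf_setIntegral_eq hM hnt htn hBmF hBA
    have e3 : ∫ ω in B, (Z ω + ε) ∂μ = (∫ ω in B, Z ω ∂μ) + (μ B).toReal * ε := by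
      rw [integral_add hZint.integrableOn (integrable_const ε).integrableOn,
        setIntegral_const, smul_eq_mul, measureReal_def]
    have e4 : ∫ ω in B, (Z ω + ε) ∂μ ≤ 0 := by
      refine setIntegral_nonpos hBm fun ω hω => ?_
      have : Z ω ≤ -ε := hω
      linarith
    rw [e1, e2, ← e3]; exact e4
  have h5 : ∫ ω in B, (Y ω + ε) ∂μ =
      (∫ ω in B1, (Y ω + ε) ∂μ) + ∫ ω in B2, (Y ω + ε) ∂μ := by
    rw [← hsplit]
    exact setIntegral_union hdisj hB2m
      (hYint.add (integrable_const ε)).integrableOn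
      (hYint.add (integrable_const ε)).integrableOn
  have h6 : ε / 2 * (μ B1).toReal ≤ ∫ ω in B1, (Y ω + ε) ∂μ := by
    have := setIntegral_mono_on (f := fun _ => ε / 2) (g := fun ω => Y ω + ε)
      (integrable_const _).integrableOn (hYint.add (integrable_const ε)).integrableOn hB1m
      (fun ω hω => by
        have : -(ε / 2) ≤ Y ω := hω.2
        linarith)
    rwa [setIntegral_const, smul_eq_mul, mul_comm] at this
  have h7 : -(x * (μ B2).toReal) ≤ ∫ ω in B2, (Y ω + ε) ∂μ := by
    have := setIntegral_mono_on_ae (f := fun _ => -x) (g := fun ω => Y ω + ε)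
      (integrable_const _).integrableOn (hYint.add (integrable_const ε)).integrableOn hB2m
      (by
        filter_upwards [zf_ae_lower hM hpos hx n ((n : ℝ) + 1)] with ω hω _
        have : -x ≤ Y ω := hω
        linarith)
    rw [setIntegral_const, smul_eq_mul] at this
    calc -(x * (μ B2).toReal) = (μ B2).toReal * (-x) := by ring
      _ ≤ _ := this
  have htail2 : (μ B2).toReal ≤ (μ {ω | Y ω ≤ -(ε / 2)}).toReal := by
    refine ENNReal.toReal_mono (measure_ne_top μ _) (measure_mono ?_)
    rintro ω ⟨_, h⟩
    simp only [Set.mem_setOf_eq] at h ⊢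
    exact h.le
  have hBle : (μ B).toReal ≤ (μ B1).toReal + (μ B2).toReal := by
    rw [← hsplit]
    refine le_trans (ENNReal.toReal_mono ?_ (measure_union_le B1 B2)) ?_
    · exact ENNReal.add_ne_top.2 ⟨measure_ne_top μ _, measure_ne_top μ _⟩
    · rw [ENNReal.toReal_add (measure_ne_top μ _) (measure_ne_top μ _)]
  have hkey2 : ε / 2 * (μ B1).toReal ≤ x * (μ {ω | Y ω ≤ -(ε / 2)}).toReal := by
    have := le_trans h6 (by linarith [h5, h7, key] :
      (∫ ω in B1, (Y ω + ε) ∂μ) ≤ x * (μ B2).toReal)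
    exact le_trans this (by
      have : (0:ℝ) ≤ x := le_of_lt hx
      nlinarith [htail2])
  have h8 : (μ B1).toReal ≤ 2 * x / ε * (μ {ω | Y ω ≤ -(ε / 2)}).toReal := by
    rw [div_mul_eq_mul_div, le_div_iff₀ hε]
    nlinarith [hkey2]
  have htail2' : (μ B2).toReal ≤ (μ {ω | Y ω ≤ -(ε / 2)}).toReal := htail2
  nlinarith [ENNReal.toReal_nonneg (a := μ {ω | Y ω ≤ -(ε / 2)})]

lemma zf_pos_part_bound [IsProbabilityMeasure μ] (hM : Martingale M ℱ μ)
    (hpos : ∀ s, 0 ≤ᵐ[μ] M s) (hx : 0 < x) {δ : ℝ} (hδ : 0 < δ) (hn : 1 ≤ n) :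
    ∫ ω, max (Zf M x n ((n : ℝ) + 1) ω) 0 ∂μ ≤
      (Real.sqrt ((n : ℝ) + 1) - Real.sqrt (n : ℝ)) * (x / Real.sqrt (n : ℝ)) + δ +
        x * (μ {ω | Zf M x n ((n : ℝ) + 1) ω ≤ -δ}).toReal := by
  set Y : Ω → ℝ := Zf M x n ((n : ℝ) + 1) with hY
  set A : Set Ω := {ω | Real.sqrt (n : ℝ) * M (n : ℝ) ω ≤ x} with hA
  have hAm : MeasurableSet A := ℱ.le _ _ (aset_measurable hM.stronglyAdapted.adapted x n)
  have hYm : Measurable Y :=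
    (zf_measurable hM.stronglyAdapted.adapted x n (by linarith [le_refl ((n : ℝ))] : (n:ℝ) ≤ (n:ℝ)+1)).mono
      (ℱ.le _) le_rfl
  have hYint : Integrable Y μ := zf_integrable hM x n _
  have hsqrtn : 0 < Real.sqrt (n : ℝ) := Real.sqrt_pos.2 (by exact_mod_cast Nat.pos_of_ne_zero (by omega))
  -- E[Y] ≤ (√(n+1) - √n) * (x / √n)
  have hEY : ∫ ω, Y ω ∂μ ≤ (Real.sqrt ((n : ℝ) + 1) - Real.sqrt (n : ℝ)) * (x / Real.sqrt (n : ℝ)) := by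
    have e1 : ∫ ω, Y ω ∂μ =
        ∫ ω in A, (Real.sqrt ((n : ℝ) + 1) * M ((n : ℝ) + 1) ω - Real.sqrt (n : ℝ) * M (n : ℝ) ω) ∂μ := by
      rw [hY, zf_eq_indicator, integral_indicator hAm]
    have e2 : ∫ ω in A, M ((n : ℝ) + 1) ω ∂μ = ∫ ω in A, M (n : ℝ) ω ∂μ :=
      (hM.setIntegral_eq (by linarith [le_refl ((n:ℝ))] : (n:ℝ) ≤ (n:ℝ)+1)
        (aset_measurable hM.stronglyAdapted.adapted x n)).symm
    have e3 : ∫ ω in A, M (n : ℝ) ω ∂μ ≤ x / Real.sqrt (n : ℝ) := by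
      have h1 : ∫ ω in A, M (n : ℝ) ω ∂μ ≤ ∫ _ω in A, (x / Real.sqrt (n : ℝ)) ∂μ := by
        refine setIntegral_mono_on (hM.integrable _).integrableOn
          (integrable_const _).integrableOn hAm fun ω hω => ?_
        have hω' : Real.sqrt (n : ℝ) * M (n : ℝ) ω ≤ x := hω
        rw [le_div_iff₀ hsqrtn]
        linarith [hω']
      have h2 : ∫ _ω in A, (x / Real.sqrt (n : ℝ)) ∂μ ≤ x / Real.sqrt (n : ℝ) := by
        rw [setIntegral_const, smul_eq_mul, measureReal_def]
        have : (μ A).toReal ≤ 1 := by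
          rw [show (1:ℝ) = (μ Set.univ).toReal by simp]
          exact ENNReal.toReal_mono (measure_ne_top μ _) (measure_mono (Set.subset_univ _))
        nlinarith [div_nonneg hx.le hsqrtn.le]
      exact h1.trans h2
    have hmono : Real.sqrt (n : ℝ) ≤ Real.sqrt ((n : ℝ) + 1) :=
      Real.sqrt_le_sqrt (by linarith)
    calc ∫ ω, Y ω ∂μ
        = (Real.sqrt ((n : ℝ) + 1) - Real.sqrt (n : ℝ)) * ∫ ω in A, M (n : ℝ) ω ∂μ := by
          rw [e1, setIntegral_lin hM _ hAm, e2]; ring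
      _ ≤ (Real.sqrt ((n : ℝ) + 1) - Real.sqrt (n : ℝ)) * (x / Real.sqrt (n : ℝ)) :=
          mul_le_mul_of_nonneg_left e3 (by linarith)
  -- E[Y⁻] ≤ δ + x μ(Y ≤ -δ)
  have hEYneg : ∫ ω, max (-Y ω) 0 ∂μ ≤ δ + x * (μ {ω | Y ω ≤ -δ}).toReal := by
    set T : Set Ω := {ω | Y ω ≤ -δ} with hT
    have hTm : MeasurableSet T := measurableSet_le hYm measurable_const
    have hgint : Integrable (fun ω => δ + x * T.indicator (fun _ => (1:ℝ)) ω) μ :=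
      (integrable_const δ).add (((integrable_const (1:ℝ)).indicator hTm).const_mul x)
    have hle : ∀ᵐ ω ∂μ, max (-Y ω) 0 ≤ δ + x * T.indicator (fun _ => (1:ℝ)) ω := by
      filter_upwards [zf_ae_lower hM hpos hx n ((n : ℝ) + 1)] with ω hω
      by_cases hc : Y ω ≤ -δ
      · rw [Set.indicator_of_mem (by exact hc : ω ∈ T)]
        have : -Y ω ≤ x := by linarith
        have h0 : (0:ℝ) ≤ x := hx.le
        simp only [max_le_iff]
        constructor <;> linarith
      · rw [Set.indicator_of_notMem (by exact hc : ω ∉ T)]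
        rw [mul_zero]
        push_neg at hc
        simp only [max_le_iff]
        constructor <;> linarith
    have hTi : ∫ ω, T.indicator (fun _ => (1:ℝ)) ω ∂μ = (μ T).toReal := by
      rw [integral_indicator hTm, setIntegral_const, smul_eq_mul, mul_one, measureReal_def]
    have := integral_mono_ae hYint.neg.pos_part hgint hle
    refine this.trans ?_
    rw [integral_add (integrable_const δ) (((integrable_const (1:ℝ)).indicator hTm).const_mul x),
      integral_const, integral_const_mul, hTi]
    simp [measure_univ]
  -- combine
  have hid : ∀ ω, max (Y ω) 0 = Y ω + max (-Y ω) 0 := by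
    intro ω
    rcases le_total (Y ω) 0 with h | h
    · rw [max_eq_right h, max_eq_left (by linarith)]; ring
    · rw [max_eq_left h, max_eq_right (by linarith)]; ring
  calc ∫ ω, max (Y ω) 0 ∂μ = ∫ ω, (Y ω + max (-Y ω) 0) ∂μ := by
        exact integral_congr_ae (Filter.Eventually.of_forall fun ω => hid ω)
    _ = (∫ ω, Y ω ∂μ) + ∫ ω, max (-Y ω) 0 ∂μ := integral_add hYint hYint.neg.pos_part
    _ ≤ _ := by linarith [hEY, hEYneg]

lemma zf_upper_tail [IsProbabilityMeasure μ] (hM : Martingale M ℱ μ)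
    (hpos : ∀ s, 0 ≤ᵐ[μ] M s) (hx : 0 < x) {ε δ : ℝ} (hε : 0 < ε) (hδ : 0 < δ)
    (hδε : δ ≤ ε / 2) (hn : 1 ≤ n) (hnt : (n : ℝ) ≤ t) (htn : t ≤ (n : ℝ) + 1) :
    (μ {ω | ε ≤ Zf M x n t ω}).toReal ≤
      (μ {ω | δ < Zf M x n ((n : ℝ) + 1) ω}).toReal +
        2 / ε * ((Real.sqrt ((n : ℝ) + 1) - Real.sqrt (n : ℝ)) * (x / Real.sqrt (n : ℝ)) + δ +
          x * (μ {ω | Zf M x n ((n : ℝ) + 1) ω ≤ -δ}).toReal) := by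
  set Y : Ω → ℝ := Zf M x n ((n : ℝ) + 1) with hY
  set Z : Ω → ℝ := Zf M x n t with hZ
  set C : Set Ω := {ω | ε ≤ Z ω} with hC
  set C1 : Set Ω := C ∩ {ω | Y ω ≤ δ} with hC1
  set C2 : Set Ω := C ∩ {ω | δ < Y ω} with hC2
  have hCA : C ⊆ {ω | Real.sqrt (n : ℝ) * M (n : ℝ) ω ≤ x} := by
    intro ω hω
    by_contra h
    have h' : ¬ (Real.sqrt (n : ℝ) * M (n : ℝ) ω ≤ x) := h
    have : Z ω = 0 := by
      simp only [hZ, Zf]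
      rw [if_neg h', mul_zero]
    have hω' : ε ≤ Z ω := hω
    rw [this] at hω'; linarith
  have hCmF : MeasurableSet[ℱ t] C :=
    measurableSet_le measurable_const (zf_measurable hM.stronglyAdapted.adapted x n hnt)
  have hCm : MeasurableSet C := ℱ.le t _ hCmF
  have hYm : Measurable Y :=
    (zf_measurable hM.stronglyAdapted.adapted x n (by linarith [le_refl ((n:ℝ))] : (n:ℝ) ≤ (n:ℝ)+1)).mono
      (ℱ.le _) le_rfl
  have hC1m : MeasurableSet C1 := hCm.inter (measurableSet_le hYm measurable_const)
  have hC2m : MeasurableSet C2 := hCm.inter (measurableSet_lt measurable_const hYm)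
  have hYint : Integrable Y μ := zf_integrable hM x n _
  have hZint : Integrable Z μ := zf_integrable hM x n t
  have hsplit : C1 ∪ C2 = C := by
    ext ω
    simp only [Set.mem_union, Set.mem_inter_iff, Set.mem_setOf_eq]
    constructor
    · rintro (⟨h, _⟩ | ⟨h, _⟩) <;> exact h
    · intro h
      rcases le_or_gt (Y ω) δ with h' | h'
      exacts [Or.inl ⟨h, h'⟩, Or.inr ⟨h, h'⟩]
  have hdisj : Disjoint C1 C2 := by
    rw [Set.disjoint_left]
    rintro ω ⟨_, h1⟩ ⟨_, h2⟩
    simp only [Set.mem_setOf_eq] at h1 h2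
    linarith
  have key : 0 ≤ ∫ ω in C, (Y ω - ε) ∂μ := by
    have e1 : ∫ ω in C, (Y ω - ε) ∂μ = (∫ ω in C, Y ω ∂μ) - (μ C).toReal * ε := by
      rw [integral_sub hYint.integrableOn (integrable_const ε).integrableOn,
        setIntegral_const, smul_eq_mul, measureReal_def]
    have e2 : ∫ ω in C, Y ω ∂μ = ∫ ω in C, Z ω ∂μ :=
      zf_setIntegral_eq hM hnt htn hCmF hCA
    have e3 : ∫ ω in C, (Z ω - ε) ∂μ = (∫ ω in C, Z ω ∂μ) - (μ C).toReal * ε := by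
      rw [integral_sub hZint.integrableOn (integrable_const ε).integrableOn,
        setIntegral_const, smul_eq_mul, measureReal_def]
    have e4 : 0 ≤ ∫ ω in C, (Z ω - ε) ∂μ := by
      refine setIntegral_nonneg hCm fun ω hω => ?_
      have : ε ≤ Z ω := hω
      linarith
    rw [e1, e2, ← e3]; exact e4
  have h5 : ∫ ω in C, (Y ω - ε) ∂μ =
      (∫ ω in C1, (Y ω - ε) ∂μ) + ∫ ω in C2, (Y ω - ε) ∂μ := by
    rw [← hsplit]
    exact setIntegral_union hdisj hC2m
      (hYint.sub (integrable_const ε)).integrableOn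
      (hYint.sub (integrable_const ε)).integrableOn
  have h6 : ∫ ω in C1, (Y ω - ε) ∂μ ≤ (δ - ε) * (μ C1).toReal := by
    have := setIntegral_mono_on (f := fun ω => Y ω - ε) (g := fun _ => δ - ε)
      (hYint.sub (integrable_const ε)).integrableOn (integrable_const _).integrableOn hC1m
      (fun ω hω => by
        have h' : Y ω ≤ δ := hω.2
        show Y ω - ε ≤ δ - ε
        linarith)
    rwa [setIntegral_const, smul_eq_mul, mul_comm] at this
  have h7 : ∫ ω in C2, (Y ω - ε) ∂μ ≤ ∫ ω, max (Y ω) 0 ∂μ := by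
    have h7a : ∫ ω in C2, (Y ω - ε) ∂μ ≤ ∫ ω in C2, max (Y ω) 0 ∂μ := by
      refine setIntegral_mono_on (hYint.sub (integrable_const ε)).integrableOn
        hYint.pos_part.integrableOn hC2m fun ω _ => ?_
      have := le_max_left (Y ω) 0
      linarith
    exact h7a.trans (setIntegral_le_integral hYint.pos_part
      (Filter.Eventually.of_forall fun ω => le_max_right _ _))
  set W : ℝ := (Real.sqrt ((n : ℝ) + 1) - Real.sqrt (n : ℝ)) * (x / Real.sqrt (n : ℝ)) + δ +
    x * (μ {ω | Y ω ≤ -δ}).toReal with hWdef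
  have hW : ∫ ω, max (Y ω) 0 ∂μ ≤ W := zf_pos_part_bound hM hpos hx hδ hn
  have hWnn : 0 ≤ W := by
    rw [hWdef]
    have h1 : 0 ≤ (Real.sqrt ((n : ℝ) + 1) - Real.sqrt (n : ℝ)) * (x / Real.sqrt (n : ℝ)) := by
      have : Real.sqrt (n : ℝ) ≤ Real.sqrt ((n : ℝ) + 1) := Real.sqrt_le_sqrt (by linarith)
      exact mul_nonneg (by linarith) (div_nonneg hx.le (Real.sqrt_nonneg _))
    have h2 : 0 ≤ x * (μ {ω | Y ω ≤ -δ}).toReal :=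
      mul_nonneg hx.le ENNReal.toReal_nonneg
    linarith
  have hC1b : (μ C1).toReal ≤ 2 / ε * W := by
    have hεδ : ε / 2 ≤ ε - δ := by linarith
    have h8 : (ε - δ) * (μ C1).toReal ≤ W := by nlinarith [key, h5, h6, h7, hW]
    have h9 : ε / 2 * (μ C1).toReal ≤ W :=
      le_trans (mul_le_mul_of_nonneg_right hεδ ENNReal.toReal_nonneg) h8
    rw [div_mul_eq_mul_div, le_div_iff₀ hε]
    nlinarith [h9]
  have hC2b : (μ C2).toReal ≤ (μ {ω | δ < Y ω}).toReal :=
    ENNReal.toReal_mono (measure_ne_top μ _) (measure_mono fun ω hω => hω.2)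
  have hCle : (μ C).toReal ≤ (μ C1).toReal + (μ C2).toReal := by
    rw [← hsplit]
    refine le_trans (ENNReal.toReal_mono ?_ (measure_union_le C1 C2)) ?_
    · exact ENNReal.add_ne_top.2 ⟨measure_ne_top μ _, measure_ne_top μ _⟩
    · rw [ENNReal.toReal_add (measure_ne_top μ _) (measure_ne_top μ _)]
  calc (μ C).toReal ≤ (μ C1).toReal + (μ C2).toReal := hCle
    _ ≤ (μ {ω | δ < Y ω}).toReal + 2 / ε * W := by linarith

lemma sqrt_gap (c : ℝ) (hc : 0 ≤ c) :
    Tendsto (fun n : ℕ => (Real.sqrt ((n : ℝ) + 1) - Real.sqrt (n : ℝ)) *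
      (c / Real.sqrt (n : ℝ))) atTop (𝓝 0) := by
  have hb : Tendsto (fun n : ℕ => c / (n : ℝ)) atTop (𝓝 0) :=
    tendsto_const_div_atTop_nhds_zero_nat c
  refine squeeze_zero (fun n => ?_) (fun n => ?_) hb
  · have hmono : Real.sqrt (n : ℝ) ≤ Real.sqrt ((n : ℝ) + 1) := Real.sqrt_le_sqrt (by linarith)
    exact mul_nonneg (by linarith) (div_nonneg hc (Real.sqrt_nonneg _))
  · rcases Nat.eq_zero_or_pos n with h0 | h0
    · subst h0; simp
    · set b := Real.sqrt (n : ℝ) with hbdef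
      set a := Real.sqrt ((n : ℝ) + 1) with hadef
      have hbpos : 0 < b := Real.sqrt_pos.2 (by exact_mod_cast h0)
      have hanneg : 0 ≤ a := Real.sqrt_nonneg _
      have hmono : b ≤ a := Real.sqrt_le_sqrt (by linarith)
      have hb2 : b * b = (n : ℝ) := Real.mul_self_sqrt (by positivity)
      have ha2 : a * a = (n : ℝ) + 1 := Real.mul_self_sqrt (by positivity)
      have hab : (a - b) * (a + b) = 1 := by nlinarith
      have h1 : (a - b) * b ≤ 1 := by nlinarith
      calc (a - b) * (c / b) = ((a - b) * b) * (c / (b * b)) := by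
            field_simp
        _ ≤ 1 * (c / (b * b)) :=
            mul_le_mul_of_nonneg_right h1 (div_nonneg hc (by positivity))
        _ = c / (n : ℝ) := by rw [one_mul, hb2]

lemma zf_tendsto [IsProbabilityMeasure μ] (hM : Martingale M ℱ μ)
    (hpos : ∀ s, 0 ≤ᵐ[μ] M s) (hx : 0 < x)
    (hdiffx : TendstoInMeasure μ (fun (n : ℕ) (ω : Ω) => Zf M x n ((n : ℝ) + 1) ω) atTop
      (fun _ => 0))
    {ε : ℝ} (hε : 0 < ε) :
    Tendsto (fun t : ℝ => μ {ω | ε ≤ |Zf M x ⌊t⌋₊ t ω|}) atTop (𝓝 0) := by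
  -- tails of Y in real terms
  have base : ∀ a : ℝ, 0 < a →
      Tendsto (fun n : ℕ => (μ {ω | a ≤ |Zf M x n ((n : ℝ) + 1) ω|}).toReal) atTop (𝓝 0) := by
    intro a ha
    have h := tendstoInMeasure_iff_dist.1 hdiffx a ha
    have heq : (fun n : ℕ => μ {ω | a ≤ dist (Zf M x n ((n : ℝ) + 1) ω) ((fun _ => (0:ℝ)) ω)})
        = fun n : ℕ => μ {ω | a ≤ |Zf M x n ((n : ℝ) + 1) ω|} := by
      funext n
      congr 1
      ext ω
      simp [Real.dist_eq]
    rw [heq] at h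
    simpa [Function.comp_def] using (ENNReal.tendsto_toReal ENNReal.zero_ne_top).comp h
  have ptail : ∀ a : ℝ, 0 < a →
      Tendsto (fun n : ℕ => (μ {ω | Zf M x n ((n : ℝ) + 1) ω ≤ -a}).toReal) atTop (𝓝 0) := by
    intro a ha
    refine squeeze_zero (fun n => ENNReal.toReal_nonneg) (fun n => ?_) (base a ha)
    refine ENNReal.toReal_mono (measure_ne_top μ _) (measure_mono fun ω hω => ?_)
    have hω' : Zf M x n ((n : ℝ) + 1) ω ≤ -a := hω
    simp only [Set.mem_setOf_eq, abs_le']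
    rw [le_abs]
    right; linarith
  have qtail : ∀ a : ℝ, 0 < a →
      Tendsto (fun n : ℕ => (μ {ω | a < Zf M x n ((n : ℝ) + 1) ω}).toReal) atTop (𝓝 0) := by
    intro a ha
    refine squeeze_zero (fun n => ENNReal.toReal_nonneg) (fun n => ?_) (base a ha)
    refine ENNReal.toReal_mono (measure_ne_top μ _) (measure_mono fun ω hω => ?_)
    have hω' : a < Zf M x n ((n : ℝ) + 1) ω := hω
    rw [Set.mem_setOf_eq, le_abs]
    left; linarith
  -- main: real version
  have main : Tendsto (fun t : ℝ => (μ {ω | ε ≤ |Zf M x ⌊t⌋₊ t ω|}).toReal) atTop (𝓝 0) := by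
    rw [Metric.tendsto_atTop]
    intro η hη
    set δ : ℝ := min (ε / 2) (ε * η / 16) with hδdef
    have hδpos : 0 < δ := lt_min (by linarith) (by positivity)
    have hδε : δ ≤ ε / 2 := min_le_left _ _
    have hδη : 2 / ε * δ ≤ η / 8 := by
      have : δ ≤ ε * η / 16 := min_le_right _ _
      rw [div_mul_eq_mul_div, div_le_div_iff₀ hε (by norm_num : (0:ℝ) < 8)]
      nlinarith
    have hcoef : 0 < 1 + 2 * x / ε := by positivity
    have ev1 : ∀ᶠ n : ℕ in atTop,
        (μ {ω | Zf M x n ((n : ℝ) + 1) ω ≤ -(ε / 2)}).toReal < η / 8 / (1 + 2 * x / ε) :=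
      (ptail (ε / 2) (by linarith)).eventually_lt_const (by positivity)
    have ev2 : ∀ᶠ n : ℕ in atTop,
        (μ {ω | δ < Zf M x n ((n : ℝ) + 1) ω}).toReal < η / 8 :=
      (qtail δ hδpos).eventually_lt_const (by positivity)
    have ev3 : ∀ᶠ n : ℕ in atTop,
        (Real.sqrt ((n : ℝ) + 1) - Real.sqrt (n : ℝ)) * (x / Real.sqrt (n : ℝ)) < ε * η / 16 :=
      (sqrt_gap x hx.le).eventually_lt_const (by positivity)
    have ev4 : ∀ᶠ n : ℕ in atTop,
        (μ {ω | Zf M x n ((n : ℝ) + 1) ω ≤ -δ}).toReal < ε * η / (16 * x) :=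
      (ptail δ hδpos).eventually_lt_const (by positivity)
    have ev5 : ∀ᶠ n : ℕ in atTop, 1 ≤ n := eventually_ge_atTop 1
    obtain ⟨N, hN⟩ := eventually_atTop.1 ((((ev1.and ev2).and ev3).and ev4).and ev5)
    refine ⟨(N : ℝ) + 1, fun t ht => ?_⟩
    have htnn : (0:ℝ) ≤ t := le_trans (by positivity) ht
    set n : ℕ := ⌊t⌋₊ with hndef
    have hnN : N ≤ n := Nat.le_floor (by linarith)
    obtain ⟨⟨⟨⟨h1, h2⟩, h3⟩, h4⟩, h5⟩ := hN n hnN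
    have hnt : (n : ℝ) ≤ t := Nat.floor_le htnn
    have htn : t ≤ (n : ℝ) + 1 := (Nat.lt_floor_add_one t).le
    -- combine the two tails
    have hsub : {ω | ε ≤ |Zf M x n t ω|} ⊆
        {ω | Zf M x n t ω ≤ -ε} ∪ {ω | ε ≤ Zf M x n t ω} := by
      intro ω hω
      have hω' : ε ≤ |Zf M x n t ω| := hω
      rcases abs_cases (Zf M x n t ω) with ⟨habs, _⟩ | ⟨habs, _⟩
      · right; rw [Set.mem_setOf_eq]; linarith
      · left; rw [Set.mem_setOf_eq]; linarith
    have hsplit : (μ {ω | ε ≤ |Zf M x n t ω|}).toReal ≤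
        (μ {ω | Zf M x n t ω ≤ -ε}).toReal + (μ {ω | ε ≤ Zf M x n t ω}).toReal := by
      refine le_trans (ENNReal.toReal_mono ?_ ((measure_mono hsub).trans (measure_union_le _ _))) ?_
      · exact ENNReal.add_ne_top.2 ⟨measure_ne_top μ _, measure_ne_top μ _⟩
      · rw [ENNReal.toReal_add (measure_ne_top μ _) (measure_ne_top μ _)]
    have hB := zf_lower_tail hM hpos hx hε hnt htn
    have hC := zf_upper_tail hM hpos hx hε hδpos hδε h5 hnt htn
    have hBb : (1 + 2 * x / ε) * (μ {ω | Zf M x n ((n : ℝ) + 1) ω ≤ -(ε / 2)}).toReal ≤ η / 8 := by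
      rw [← le_div_iff₀' hcoef]
      exact h1.le
    have hCb : (μ {ω | δ < Zf M x n ((n : ℝ) + 1) ω}).toReal +
        2 / ε * ((Real.sqrt ((n : ℝ) + 1) - Real.sqrt (n : ℝ)) * (x / Real.sqrt (n : ℝ)) + δ +
          x * (μ {ω | Zf M x n ((n : ℝ) + 1) ω ≤ -δ}).toReal) ≤ η / 8 + 3 * (η / 8) := by
      have e3 : 2 / ε * ((Real.sqrt ((n : ℝ) + 1) - Real.sqrt (n : ℝ)) * (x / Real.sqrt (n : ℝ)))
          ≤ η / 8 := by
        have h2ε : 0 < 2 / ε := by positivity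
        calc 2 / ε * ((Real.sqrt ((n : ℝ) + 1) - Real.sqrt (n : ℝ)) * (x / Real.sqrt (n : ℝ)))
            ≤ 2 / ε * (ε * η / 16) := mul_le_mul_of_nonneg_left h3.le h2ε.le
          _ ≤ η / 8 := by
            rw [mul_comm]
            rw [← le_div_iff₀ h2ε]
            rw [div_div_eq_mul_div, div_le_div_iff₀ (by norm_num) (by positivity)]
            ring_nf
            nlinarith [hε, hη]
      have e4 : 2 / ε * (x * (μ {ω | Zf M x n ((n : ℝ) + 1) ω ≤ -δ}).toReal) ≤ η / 8 := by
        have := mul_le_mul_of_nonneg_left h4.le (by positivity : (0:ℝ) ≤ 2 / ε * x)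
        calc 2 / ε * (x * (μ {ω | Zf M x n ((n : ℝ) + 1) ω ≤ -δ}).toReal)
            = 2 / ε * x * (μ {ω | Zf M x n ((n : ℝ) + 1) ω ≤ -δ}).toReal := by ring
          _ ≤ 2 / ε * x * (ε * η / (16 * x)) := this
          _ ≤ η / 8 := by
            rw [show 2 / ε * x * (ε * η / (16 * x)) = (x / x) * ((ε / ε) * (2 * η / 16)) by ring]
            rw [div_self (ne_of_gt hx), div_self (ne_of_gt hε), one_mul, one_mul]
            linarith
      have e2 : (μ {ω | δ < Zf M x n ((n : ℝ) + 1) ω}).toReal ≤ η / 8 := h2.le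
      have edist : 2 / ε * ((Real.sqrt ((n : ℝ) + 1) - Real.sqrt (n : ℝ)) * (x / Real.sqrt (n : ℝ)) + δ +
          x * (μ {ω | Zf M x n ((n : ℝ) + 1) ω ≤ -δ}).toReal)
          = 2 / ε * ((Real.sqrt ((n : ℝ) + 1) - Real.sqrt (n : ℝ)) * (x / Real.sqrt (n : ℝ)))
            + 2 / ε * δ + 2 / ε * (x * (μ {ω | Zf M x n ((n : ℝ) + 1) ω ≤ -δ}).toReal) := by ring
      rw [edist]
      linarith [hδη]
    have hfinal : (μ {ω | ε ≤ |Zf M x n t ω|}).toReal ≤ 5 * (η / 8) := by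
      have := hsplit.trans (add_le_add (hB.trans hBb) (hC.trans hCb))
      linarith
    have hnnval : 0 ≤ (μ {ω | ε ≤ |Zf M x n t ω|}).toReal := ENNReal.toReal_nonneg
    rw [Real.dist_eq, sub_zero, abs_of_nonneg hnnval]
    linarith
  -- convert to ℝ≥0∞
  have heq : (fun t : ℝ => μ {ω | ε ≤ |Zf M x ⌊t⌋₊ t ω|})
      = fun t : ℝ => ENNReal.ofReal ((μ {ω | ε ≤ |Zf M x ⌊t⌋₊ t ω|}).toReal) :=
    funext fun t => (ENNReal.ofReal_toReal (measure_ne_top μ _)).symm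
  rw [heq]
  simpa using ENNReal.tendsto_ofReal main

end aux


/-- Interpolation step in Proposition 3.2(i): if `(M_t)` is a nonnegative martingale with
`√n M_n → D` in probability along the integers, if for every `x > 0` the truncated
increments `(√(n+1) M_{n+1} − √n M_n) 1{√n M_n ≤ x}` tend to `0` in probability, and the
conditional-Jensen inequality
`E exp(−u(√(⌊t⌋+1)M_t − √⌊t⌋M_⌊t⌋)1{·}) ≥ E exp(−u(√(⌊t⌋+1)M_{⌊t⌋+1} − √⌊t⌋M_⌊t⌋)1{·})`
holds for all `u ≥ 0`, then `√t M_t → D` in probability as `t → ∞` through the reals. -/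
theorem stmt14 {Ω : Type*} {m0 : MeasurableSpace Ω} (μ : Measure Ω) [IsProbabilityMeasure μ]
    (ℱ : Filtration ℝ m0) (M : ℝ → Ω → ℝ) (hM : Martingale M ℱ μ)
    (hpos : ∀ t, 0 ≤ᵐ[μ] M t) (D : Ω → ℝ)
    (hint : TendstoInMeasure μ
      (fun (n : ℕ) (ω : Ω) => Real.sqrt n * M n ω) atTop D)
    (hdiff : ∀ x > (0:ℝ), TendstoInMeasure μ
      (fun (n : ℕ) (ω : Ω) =>
        (Real.sqrt (n + 1) * M (n + 1) ω - Real.sqrt n * M n ω) *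
          (if Real.sqrt n * M n ω ≤ x then 1 else 0)) atTop (fun _ => 0))
    (hjensen : ∀ u ≥ (0:ℝ), ∀ x > (0:ℝ), ∀ t : ℝ, 0 ≤ t →
      (∫ ω, Real.exp (-u * ((Real.sqrt ((⌊t⌋₊ : ℝ) + 1) * M t ω -
          Real.sqrt (⌊t⌋₊ : ℝ) * M (⌊t⌋₊ : ℝ) ω) *
        (if Real.sqrt (⌊t⌋₊ : ℝ) * M (⌊t⌋₊ : ℝ) ω ≤ x then 1 else 0))) ∂μ) ≥
      ∫ ω, Real.exp (-u * ((Real.sqrt ((⌊t⌋₊ : ℝ) + 1) * M ((⌊t⌋₊ : ℝ) + 1) ω -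
          Real.sqrt (⌊t⌋₊ : ℝ) * M (⌊t⌋₊ : ℝ) ω) *
        (if Real.sqrt (⌊t⌋₊ : ℝ) * M (⌊t⌋₊ : ℝ) ω ≤ x then 1 else 0))) ∂μ) :
    TendstoInMeasure μ (fun (t : ℝ) (ω : Ω) => Real.sqrt t * M t ω) atTop D := by
  rw [tendstoInMeasure_iff_dist]
  intro ε hε
  rw [ENNReal.tendsto_nhds_zero]
  intro η hη
  have hε3 : (0:ℝ) < ε / 3 := by linarith
  set ε3 : ℝ := ε / 3 with hε3def
  -- budget
  set η4 : ℝ≥0∞ := min η 1 / 4 with hη4def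
  have hη1pos : (0:ℝ≥0∞) < min η 1 := lt_min hη zero_lt_one
  have hη4pos : (0:ℝ≥0∞) < η4 := ENNReal.div_pos hη1pos.ne' (by norm_num)
  -- measurability of D
  have hDae : AEMeasurable D μ := by
    refine hint.aemeasurable fun n => ?_
    exact ((((hM.stronglyAdapted (n : ℝ)).mono (ℱ.le _)).measurable).const_mul _).aemeasurable
  obtain ⟨D', hD'm, hDD'⟩ := hDae
  -- choose the truncation level x = k + 1
  have hseq : Tendsto (fun k : ℕ => μ {ω | (k : ℝ) < D' ω}) atTop
      (𝓝 (μ (⋂ k : ℕ, {ω | (k : ℝ) < D' ω}))) := by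
    refine tendsto_measure_iInter_atTop
      (fun k => (measurableSet_lt measurable_const hD'm).nullMeasurableSet)
      (fun i j hij ω hω => ?_) ⟨0, measure_ne_top μ _⟩
    have hω' : (j : ℝ) < D' ω := hω
    have : (i : ℝ) ≤ (j : ℝ) := by exact_mod_cast hij
    exact lt_of_le_of_lt this hω'
  have hempty : (⋂ k : ℕ, {ω | (k : ℝ) < D' ω}) = ∅ := by
    ext ω
    simp only [Set.mem_iInter, Set.mem_setOf_eq, Set.mem_empty_iff_false, iff_false, not_forall,
      not_lt]
    exact exists_nat_ge (D' ω)
  rw [hempty, measure_empty] at hseq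
  obtain ⟨k, hk⟩ := (hseq.eventually_lt_const hη4pos).exists
  set x : ℝ := (k : ℝ) + 1 with hxdef
  have hx : 0 < x := by positivity
  have hDtail : μ {ω | (k : ℝ) < D ω} < η4 := by
    have hae : {ω | (k : ℝ) < D ω} =ᵐ[μ] {ω | (k : ℝ) < D' ω} := by
      filter_upwards [hDD'] with ω h
      show ((k : ℝ) < D ω) = ((k : ℝ) < D' ω)
      rw [h]
    rw [measure_congr hae]
    exact hk
  -- eventual smallness of the four pieces
  have evT2 : ∀ᶠ t : ℝ in atTop, μ {ω | ε3 ≤ |Zf M x ⌊t⌋₊ t ω|} < η4 := by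
    have hz := zf_tendsto hM hpos hx (hdiff x hx) hε3
    exact hz.eventually_lt_const hη4pos
  have evT3 : ∀ᶠ t : ℝ in atTop,
      μ {ω | ε3 ≤ dist (Real.sqrt (⌊t⌋₊ : ℝ) * M (⌊t⌋₊ : ℝ) ω) (D ω)} < η4 :=
    (((tendstoInMeasure_iff_dist.1 hint ε3 hε3).comp (tendsto_nat_floor_atTop (α := ℝ))).eventually_lt_const hη4pos :)
  have evT4 : ∀ᶠ t : ℝ in atTop,
      μ {ω | 1 ≤ dist (Real.sqrt (⌊t⌋₊ : ℝ) * M (⌊t⌋₊ : ℝ) ω) (D ω)} < η4 :=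
    (((tendstoInMeasure_iff_dist.1 hint 1 one_pos).comp (tendsto_nat_floor_atTop (α := ℝ))).eventually_lt_const hη4pos :)
  have evC : ∀ᶠ t : ℝ in atTop,
      (Real.sqrt ((⌊t⌋₊ : ℝ) + 1) - Real.sqrt (⌊t⌋₊ : ℝ)) * ((x + ε3) / Real.sqrt (⌊t⌋₊ : ℝ))
        < ε3 :=
    (tendsto_nat_floor_atTop (α := ℝ)).eventually ((sqrt_gap (x + ε3) (by positivity)).eventually_lt_const hε3)
  have evN : ∀ᶠ t : ℝ in atTop, 1 ≤ ⌊t⌋₊ :=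
    (tendsto_nat_floor_atTop (α := ℝ)).eventually (eventually_ge_atTop 1)
  have evt0 : ∀ᶠ t : ℝ in atTop, (0:ℝ) ≤ t := eventually_ge_atTop 0
  filter_upwards [evT2, evT3, evT4, evC, evN, evt0] with t h2 h3 h4 hgap hn1 ht0
  set n : ℕ := ⌊t⌋₊ with hndef
  have hnt : (n : ℝ) ≤ t := Nat.floor_le ht0
  have htn : t ≤ (n : ℝ) + 1 := (Nat.lt_floor_add_one t).le
  have hsqn : 0 < Real.sqrt (n : ℝ) := Real.sqrt_pos.2 (by exact_mod_cast hn1)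
  have hsqn1 : 0 < Real.sqrt ((n : ℝ) + 1) := Real.sqrt_pos.2 (by positivity)
  have hst1 : Real.sqrt (n : ℝ) ≤ Real.sqrt t := Real.sqrt_le_sqrt hnt
  have hst2 : Real.sqrt t ≤ Real.sqrt ((n : ℝ) + 1) := Real.sqrt_le_sqrt htn
  -- the pointwise inclusion
  have hsub : {ω | ε ≤ dist (Real.sqrt t * M t ω) (D ω)} ∩ {ω | 0 ≤ M t ω} ⊆
      ({ω | ε3 ≤ |Zf M x n t ω|} ∪ {ω | ε3 ≤ dist (Real.sqrt (n : ℝ) * M (n : ℝ) ω) (D ω)}) ∪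
      ({ω | 1 ≤ dist (Real.sqrt (n : ℝ) * M (n : ℝ) ω) (D ω)} ∪ {ω | (k : ℝ) < D ω}) := by
    rintro ω ⟨hS, hG⟩
    have hS' : ε ≤ dist (Real.sqrt t * M t ω) (D ω) := hS
    have hG' : 0 ≤ M t ω := hG
    by_contra hcon
    simp only [Set.mem_union, Set.mem_setOf_eq, not_or, not_le, not_lt] at hcon
    obtain ⟨⟨hz, hd3⟩, hd4, hDk⟩ := hcon
    rw [Real.dist_eq] at hS' hd3 hd4
    -- ω is in the truncation event
    have hcx : Real.sqrt (n : ℝ) * M (n : ℝ) ω ≤ x := by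
      by_contra hcx
      push_neg at hcx
      have h1 : Real.sqrt (n : ℝ) * M (n : ℝ) ω - D ω < 1 := (abs_lt.1 hd4).2
      have : (k : ℝ) < D ω := by
        rw [hxdef] at hcx
        linarith
      linarith
    have hZeq : Zf M x n t ω =
        Real.sqrt ((n : ℝ) + 1) * M t ω - Real.sqrt (n : ℝ) * M (n : ℝ) ω := by
      simp only [Zf]
      rw [if_pos hcx, mul_one]
    rw [hZeq] at hz
    have hbc := abs_lt.1 hz
    -- upper bound for M t
    have hb_ub : Real.sqrt ((n : ℝ) + 1) * M t ω ≤ x + ε3 := by linarith [hbc.2]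
    have hMt_ub : M t ω ≤ (x + ε3) / Real.sqrt (n : ℝ) := by
      have h1 : M t ω ≤ (x + ε3) / Real.sqrt ((n : ℝ) + 1) := by
        rw [le_div_iff₀ hsqn1, mul_comm]
        exact hb_ub
      refine h1.trans ?_
      apply div_le_div_of_nonneg_left (by positivity) hsqn
      linarith
    -- interpolation error
    have hab : |Real.sqrt t * M t ω - Real.sqrt ((n : ℝ) + 1) * M t ω| ≤
        (Real.sqrt ((n : ℝ) + 1) - Real.sqrt (n : ℝ)) * M t ω := by
      have e1 : Real.sqrt t * M t ω - Real.sqrt ((n : ℝ) + 1) * M t ω =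
          (Real.sqrt t - Real.sqrt ((n : ℝ) + 1)) * M t ω := by ring
      rw [e1, abs_mul, abs_of_nonpos (by linarith), abs_of_nonneg hG']
      have : -(Real.sqrt t - Real.sqrt ((n : ℝ) + 1)) ≤
          Real.sqrt ((n : ℝ) + 1) - Real.sqrt (n : ℝ) := by linarith
      exact mul_le_mul_of_nonneg_right this hG'
    have hab2 : (Real.sqrt ((n : ℝ) + 1) - Real.sqrt (n : ℝ)) * M t ω ≤
        (Real.sqrt ((n : ℝ) + 1) - Real.sqrt (n : ℝ)) * ((x + ε3) / Real.sqrt (n : ℝ)) :=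
      mul_le_mul_of_nonneg_left hMt_ub (by linarith)
    -- triangle inequality
    have htri : |Real.sqrt t * M t ω - D ω| ≤
        |Real.sqrt t * M t ω - Real.sqrt ((n : ℝ) + 1) * M t ω| +
          |Real.sqrt ((n : ℝ) + 1) * M t ω - Real.sqrt (n : ℝ) * M (n : ℝ) ω| +
          |Real.sqrt (n : ℝ) * M (n : ℝ) ω - D ω| := by
      have t1 := abs_sub_le (Real.sqrt t * M t ω) (Real.sqrt ((n : ℝ) + 1) * M t ω) (D ω)
      have t2 := abs_sub_le (Real.sqrt ((n : ℝ) + 1) * M t ω)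
        (Real.sqrt (n : ℝ) * M (n : ℝ) ω) (D ω)
      linarith
    have habs : |Real.sqrt ((n : ℝ) + 1) * M t ω - Real.sqrt (n : ℝ) * M (n : ℝ) ω| < ε3 :=
      abs_lt.2 hbc
    have : ε ≤ ε3 + ε3 + ε3 := by
      calc ε ≤ |Real.sqrt t * M t ω - D ω| := hS'
        _ ≤ _ := htri
        _ ≤ _ := by
          have := hab.trans hab2
          linarith [hgap, habs, hd3]
    rw [hε3def] at this
    linarith
  -- measure arithmetic
  have hnull : μ {ω | 0 ≤ M t ω}ᶜ = 0 := by
    have h0 : ∀ᵐ ω ∂μ, 0 ≤ M t ω := hpos t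
    rw [ae_iff] at h0
    simpa [Set.compl_setOf] using h0
  calc μ {ω | ε ≤ dist (Real.sqrt t * M t ω) (D ω)}
      ≤ μ (({ω | ε ≤ dist (Real.sqrt t * M t ω) (D ω)} ∩ {ω | 0 ≤ M t ω}) ∪
          {ω | 0 ≤ M t ω}ᶜ) := by
        refine measure_mono fun ω hω => ?_
        by_cases hg : 0 ≤ M t ω
        · exact Or.inl ⟨hω, hg⟩
        · exact Or.inr hg
    _ ≤ μ ({ω | ε ≤ dist (Real.sqrt t * M t ω) (D ω)} ∩ {ω | 0 ≤ M t ω}) +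
          μ ({ω | 0 ≤ M t ω}ᶜ) := measure_union_le _ _
    _ = μ ({ω | ε ≤ dist (Real.sqrt t * M t ω) (D ω)} ∩ {ω | 0 ≤ M t ω}) := by
        rw [hnull, add_zero]
    _ ≤ μ (({ω | ε3 ≤ |Zf M x n t ω|} ∪
          {ω | ε3 ≤ dist (Real.sqrt (n : ℝ) * M (n : ℝ) ω) (D ω)}) ∪
          ({ω | 1 ≤ dist (Real.sqrt (n : ℝ) * M (n : ℝ) ω) (D ω)} ∪ {ω | (k : ℝ) < D ω})) :=
        measure_mono hsub
    _ ≤ (μ {ω | ε3 ≤ |Zf M x n t ω|} +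
          μ {ω | ε3 ≤ dist (Real.sqrt (n : ℝ) * M (n : ℝ) ω) (D ω)}) +
          (μ {ω | 1 ≤ dist (Real.sqrt (n : ℝ) * M (n : ℝ) ω) (D ω)} + μ {ω | (k : ℝ) < D ω}) :=
        le_trans (measure_union_le _ _) (add_le_add (measure_union_le _ _) (measure_union_le _ _))
    _ ≤ η4 + η4 + (η4 + η4) := by
        exact add_le_add (add_le_add h2.le h3.le) (add_le_add h4.le hDtail.le)
    _ = 4 * η4 := by ring
    _ = min η 1 := by
        rw [hη4def, ENNReal.mul_div_cancel' (by norm_num) (by norm_num)]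
    _ ≤ η := min_le_left _ _
end

section
/- Let p : [0,∞) → [0,1] be such that lim_{n→∞} p(nθ) = 0 for every θ > 0, and suppose p is right-continuous. Then lim_{t→∞, t∈ℝ} p(t) = 0. -/
open Filter

/-- The Croft–Kingman lemma: if `p : [0,∞) → [0,1]` is right-continuous and
`lim_{n→∞} p(nθ) = 0` for every `θ > 0`, then `lim_{t→∞, t∈ℝ} p(t) = 0`. -/
theorem stmt16 (p : ℝ → ℝ) (hrange : ∀ t : ℝ, 0 ≤ t → p t ∈ Set.Icc (0:ℝ) 1)
    (hθ : ∀ θ > (0:ℝ), Tendsto (fun n : ℕ => p (n * θ)) atTop (nhds 0))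
    (hrc : ∀ t : ℝ, ContinuousWithinAt p (Set.Ici t) t) :
    Tendsto p atTop (nhds 0) := by
  rw [Metric.tendsto_atTop]
  intro ε hε
  set δ : ℝ := ε / 2 with hδdef
  have hδ : 0 < δ := by positivity
  set A : ℕ → Set ℝ :=
    fun N => {θ : ℝ | θ ∈ Set.Icc (1:ℝ) 2 ∧ ∀ n : ℕ, N ≤ n → p (n * θ) ≤ δ} with hA
  -- the sets `A N` cover `Ioo 1 2`
  have hcover : ∀ θ ∈ Set.Ioo (1:ℝ) 2, ∃ N, θ ∈ A N := by
    intro θ hθ'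
    have hθpos : (0:ℝ) < θ := by linarith [hθ'.1]
    have hev : ∀ᶠ n : ℕ in atTop, p (n * θ) < δ :=
      (hθ θ hθpos).eventually_lt_const hδ
    obtain ⟨N, hN⟩ := eventually_atTop.mp hev
    exact ⟨N, ⟨⟨hθ'.1.le, hθ'.2.le⟩, fun n hn => (hN n hn).le⟩⟩
  -- Baire category: some closure (A N) has nonempty interior
  have hbaire : ∃ N x, x ∈ interior (closure (A N)) := by
    by_contra h
    push_neg at h
    have hdense : Dense (⋂ N, (closure (A N))ᶜ) := by
      refine dense_iInter_of_isOpen (fun N => isClosed_closure.isOpen_compl) (fun N => ?_)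
      rw [← interior_eq_empty_iff_dense_compl]
      exact Set.eq_empty_iff_forall_notMem.mpr (h N)
    obtain ⟨x, hxD, hxI⟩ := hdense.exists_mem_open isOpen_Ioo
      (⟨(3:ℝ)/2, by norm_num, by norm_num⟩ : (Set.Ioo (1:ℝ) 2).Nonempty)
    obtain ⟨N, hxA⟩ := hcover x hxI
    exact (Set.mem_iInter.mp hxD N) (subset_closure hxA)
  obtain ⟨N, x, hx⟩ := hbaire
  obtain ⟨a, b, hxab, hab⟩ := mem_nhds_iff_exists_Ioo_subset.mp (isOpen_interior.mem_nhds hx)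
  have hsub : Set.Ioo a b ⊆ closure (A N) := hab.trans interior_subset
  have hclIcc : closure (A N) ⊆ Set.Icc (1:ℝ) 2 :=
    closure_minimal (fun θ hθ => hθ.1) isClosed_Icc
  have hx1 : (1:ℝ) ≤ x := (hclIcc (hsub hxab)).1
  set a' : ℝ := max a (1/2) with ha'def
  have ha'pos : (0:ℝ) < a' := lt_of_lt_of_le (by norm_num) (le_max_right _ _)
  have ha'x : a' < x := max_lt hxab.1 (by linarith)
  have ha'b : a' < b := ha'x.trans hxab.2
  have haa' : a ≤ a' := le_max_left _ _
  have hba : 0 < b - a' := by linarith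
  -- density of A N in (a', b)
  have hdenseA : ∀ c d : ℝ, a' ≤ c → c < d → d ≤ b → ∃ θ, θ ∈ A N ∧ θ ∈ Set.Ioo c d := by
    intro c d hc hcd hdb
    have hmid : (c + d)/2 ∈ closure (A N) := by
      apply hsub
      constructor
      · have : a ≤ c := haa'.trans hc
        linarith
      · linarith
    have := mem_closure_iff.mp hmid (Set.Ioo c d) isOpen_Ioo ⟨by linarith, by linarith⟩
    obtain ⟨θ, hθo, hθA⟩ := this
    exact ⟨θ, hθA, hθo⟩
  -- choose the threshold
  set m : ℕ := max (max N 1) (⌈2 * a' / (b - a')⌉₊ + 1) with hmdef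
  refine ⟨(m + 1) * a', fun t ht => ?_⟩
  have hT0 : (0:ℝ) < (m + 1) * a' := by positivity
  have ht0 : (0:ℝ) ≤ t := le_of_lt (lt_of_lt_of_le hT0 ht)
  set n : ℕ := ⌊t / a'⌋₊ with hndef
  have htdiv : ((m:ℝ) + 1) ≤ t / a' := by
    rw [le_div_iff₀ ha'pos]
    calc ((m:ℝ) + 1) * a' = ((m + 1 : ℕ) : ℝ) * a' := by push_cast; ring
      _ ≤ t := by exact_mod_cast ht
  have hmn : m + 1 ≤ n := Nat.le_floor (by push_cast; exact htdiv)
  have hNn : N ≤ n := le_trans (le_trans (le_max_left N 1) (le_max_left _ _)) (le_trans (Nat.le_succ m) hmn)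
  have hn1 : 1 ≤ n := le_trans (le_trans (le_max_right N 1) (le_max_left _ _)) (le_trans (Nat.le_succ m) hmn)
  have hnpos : (0:ℝ) < n := by exact_mod_cast hn1
  have hnne : (n:ℝ) ≠ 0 := ne_of_gt hnpos
  have h1 : (n:ℝ) * a' ≤ t := by
    have hfl : (n:ℝ) ≤ t / a' := Nat.floor_le (by positivity)
    calc (n:ℝ) * a' ≤ (t / a') * a' := by nlinarith
      _ = t := div_mul_cancel₀ t (ne_of_gt ha'pos)
  have h2 : t < ((n:ℝ) + 1) * a' := by
    have := Nat.lt_floor_add_one (t / a')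
    have h' : t / a' < (n:ℝ) + 1 := this
    calc t = (t / a') * a' := (div_mul_cancel₀ t (ne_of_gt ha'pos)).symm
      _ < ((n:ℝ) + 1) * a' := by nlinarith
  have hceil : 2 * a' / (b - a') ≤ (n:ℝ) := by
    have h1' : 2 * a' / (b - a') ≤ (⌈2 * a' / (b - a')⌉₊ : ℝ) := Nat.le_ceil _
    have h2' : ⌈2 * a' / (b - a')⌉₊ ≤ n := le_trans (le_trans (Nat.le_succ _) (le_max_right _ _)) (le_trans (Nat.le_succ m) hmn)
    exact h1'.trans (by exact_mod_cast h2')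
  have hna' : a' ≤ (n:ℝ) * (b - a') / 2 := by
    rw [div_le_iff₀ hba] at hceil
    nlinarith
  have h3 : t / n < (a' + b) / 2 := by
    rw [div_lt_iff₀ hnpos]
    nlinarith
  have h4 : a' ≤ t / n := by
    rw [le_div_iff₀ hnpos]
    linarith [h1]
  have htnb : t / n < b := by
    have : (a' + b) / 2 < b := by linarith
    linarith
  -- choose a sequence approaching t from the right
  have hseq : ∀ k : ℕ, ∃ θ, θ ∈ A N ∧ θ ∈ Set.Ioo (t / n) (min b (t / n + 1 / (n * (k + 1)))) := by
    intro k
    refine hdenseA _ _ h4 ?_ (min_le_left _ _)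
    apply lt_min htnb
    have : (0:ℝ) < 1 / (n * (k + 1)) := by positivity
    linarith
  choose θf hθfA hθfI using hseq
  set s : ℕ → ℝ := fun k => n * θf k with hsdef
  have hslb : ∀ k, t < s k := by
    intro k
    have := (hθfI k).1
    have h' : (n:ℝ) * (t / n) < n * θf k := by
      exact mul_lt_mul_of_pos_left this hnpos
    rwa [mul_div_cancel₀ t hnne] at h'
  have hsub2 : ∀ k, s k ≤ t + 1 / ((k:ℝ) + 1) := by
    intro k
    have hub : θf k < t / n + 1 / (n * (k + 1)) :=
      lt_of_lt_of_le (hθfI k).2 (min_le_right _ _)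
    have h' : (n:ℝ) * θf k < n * (t / n + 1 / (n * (k + 1))) :=
      mul_lt_mul_of_pos_left hub hnpos
    have heq : (n:ℝ) * (t / n + 1 / (n * (k + 1))) = t + 1 / ((k:ℝ) + 1) := by
      field_simp
    rw [heq] at h'
    exact h'.le
  have htends : Tendsto s atTop (nhds t) := by
    have hupper : Tendsto (fun k : ℕ => t + 1 / ((k:ℝ) + 1)) atTop (nhds (t + 0)) :=
      tendsto_const_nhds.add tendsto_one_div_add_atTop_nhds_zero_nat
    rw [add_zero] at hupper
    exact tendsto_of_tendsto_of_tendsto_of_le_of_le tendsto_const_nhds hupper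
      (fun k => (hslb k).le) hsub2
  have hwithin : Tendsto s atTop (nhdsWithin t (Set.Ici t)) :=
    tendsto_nhdsWithin_iff.mpr ⟨htends, Eventually.of_forall (fun k => (hslb k).le)⟩
  have hpt : Tendsto (fun k => p (s k)) atTop (nhds (p t)) := (hrc t).tendsto.comp hwithin
  have hle : p t ≤ δ :=
    le_of_tendsto hpt (Eventually.of_forall (fun k => (hθfA k).2 n hNn))
  have hge : 0 ≤ p t := (hrange t ht0).1
  rw [Real.dist_eq, sub_zero, abs_of_nonneg hge]
  have : δ < ε := by rw [hδdef]; linarith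
  linarith
end
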